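/- arXiv:2604.01959 — 12 statements merged into one kernel-verified Lean document; each statement's English description precedes it below -/
import Mathlib

section
/- The return map Q has a positive fixed point: there exists x* > 0 with Q(x*) = x*. Moreover, every fixed point x* ≥ 0 of Q satisfies F₁·exp(a·Φ₂)/(1 − exp(a·Φ₂)) ≤ x* ≤ F₂·exp(a·Φ₁)/(1 − exp(a·Φ₁)). -/
open Real Set Filter

/-- The return map Q has a positive fixed point, and every nonnegative fixed point
satisfies the explicit bounds. -/
theorem stmt0
    (a : ℝ) (ha : a < 0) (Φ F : ℝ → ℝ)
    (hΦc : ContinuousOn Φ (Set.Ici 0)) (hFc : ContinuousOn F (Set.Ici 0))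
    (Φ₁ Φ₂ F₁ F₂ : ℝ) (hΦ₁ : 0 < Φ₁) (hF₁ : 0 < F₁)
    (hΦb : ∀ x : ℝ, 0 ≤ x → Φ₁ ≤ Φ x ∧ Φ x ≤ Φ₂)
    (hFb : ∀ x : ℝ, 0 ≤ x → F₁ ≤ F x ∧ F x ≤ F₂)
    (Q : ℝ → ℝ) (hQ : ∀ x : ℝ, Q x = Real.exp (a * Φ x) * (x + F x)) :
    (∃ xs : ℝ, 0 < xs ∧ Q xs = xs) ∧
    (∀ xs : ℝ, 0 ≤ xs → Q xs = xs →
      F₁ * Real.exp (a * Φ₂) / (1 - Real.exp (a * Φ₂)) ≤ xs ∧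
      xs ≤ F₂ * Real.exp (a * Φ₁) / (1 - Real.exp (a * Φ₁))) := by
  have hΦ₂ : 0 < Φ₂ := lt_of_lt_of_le hΦ₁ ((hΦb 0 le_rfl).1.trans (hΦb 0 le_rfl).2)
  have hF₂ : 0 < F₂ := lt_of_lt_of_le hF₁ ((hFb 0 le_rfl).1.trans (hFb 0 le_rfl).2)
  have he1 : Real.exp (a * Φ₁) < 1 := by
    rw [Real.exp_lt_one_iff]; exact mul_neg_of_neg_of_pos ha hΦ₁
  have he2 : Real.exp (a * Φ₂) < 1 := by
    rw [Real.exp_lt_one_iff]; exact mul_neg_of_neg_of_pos ha hΦ₂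
  -- bounds part
  have hbd : ∀ xs : ℝ, 0 ≤ xs → Q xs = xs →
      F₁ * Real.exp (a * Φ₂) / (1 - Real.exp (a * Φ₂)) ≤ xs ∧
      xs ≤ F₂ * Real.exp (a * Φ₁) / (1 - Real.exp (a * Φ₁)) := by
    intro x hx hfix
    set lam := Real.exp (a * Φ x) with hlam
    have hlampos : 0 < lam := Real.exp_pos _
    have hlam1 : lam < 1 := by
      rw [hlam, Real.exp_lt_one_iff]
      exact mul_neg_of_neg_of_pos ha (lt_of_lt_of_le hΦ₁ (hΦb x hx).1)
    have hlamlo : Real.exp (a * Φ₂) ≤ lam :=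
      Real.exp_le_exp.2 (mul_le_mul_of_nonpos_left (hΦb x hx).2 ha.le)
    have hlamhi : lam ≤ Real.exp (a * Φ₁) :=
      Real.exp_le_exp.2 (mul_le_mul_of_nonpos_left (hΦb x hx).1 ha.le)
    have key : x * (1 - lam) = lam * F x := by
      rw [hQ] at hfix; nlinarith [hfix]
    constructor
    · rw [div_le_iff₀ (by linarith)]
      have h1 : x * (1 - lam) ≥ Real.exp (a * Φ₂) * F₁ := by
        rw [key]
        exact mul_le_mul hlamlo (hFb x hx).1 hF₁.le hlampos.le
      nlinarith [Real.exp_pos (a * Φ₂)]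
    · rw [le_div_iff₀ (by linarith)]
      have h1 : x * (1 - lam) ≤ Real.exp (a * Φ₁) * F₂ := by
        rw [key]
        exact mul_le_mul hlamhi (hFb x hx).2 ((hF₁.trans_le (hFb x hx).1)).le
          (Real.exp_pos _).le
      nlinarith [Real.exp_pos (a * Φ₁)]
  refine ⟨?_, hbd⟩
  -- existence
  set M : ℝ := Real.exp (a * Φ₁) * F₂ / (1 - Real.exp (a * Φ₁)) + 1 with hM
  have hq : 0 ≤ Real.exp (a * Φ₁) * F₂ / (1 - Real.exp (a * Φ₁)) :=
    div_nonneg (by positivity) (by linarith)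
  have hMpos : 0 < M := by rw [hM]; linarith
  have hMe : M * (1 - Real.exp (a * Φ₁)) =
      Real.exp (a * Φ₁) * F₂ + (1 - Real.exp (a * Φ₁)) := by
    have hd : (1 - Real.exp (a * Φ₁)) ≠ 0 := by linarith
    rw [hM]; field_simp
  set g : ℝ → ℝ := fun x => Q x - x with hg
  have hgc : ContinuousOn g (Icc 0 M) := by
    have hsub : Icc (0:ℝ) M ⊆ Ici 0 := Icc_subset_Ici_self
    have : ContinuousOn (fun x => Real.exp (a * Φ x) * (x + F x) - x) (Icc 0 M) :=
      (((Real.continuous_exp.comp_continuousOn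
        (continuousOn_const.mul (hΦc.mono hsub)))).mul
        (continuousOn_id.add (hFc.mono hsub))).sub continuousOn_id
    exact this.congr (fun x _ => by simp [hg, hQ])
  have hg0 : 0 < g 0 := by
    simp only [hg, hQ]
    have := (hFb 0 le_rfl).1
    have := Real.exp_pos (a * Φ 0)
    nlinarith
  have hgM : g M ≤ 0 := by
    simp only [hg, hQ]
    have hΦM := (hΦb M hMpos.le).1
    have hFM := (hFb M hMpos.le).2
    have hFM1 := (hFb M hMpos.le).1
    have hlamhi : Real.exp (a * Φ M) ≤ Real.exp (a * Φ₁) :=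
      Real.exp_le_exp.2 (mul_le_mul_of_nonpos_left hΦM ha.le)
    have h2 : Real.exp (a * Φ M) * (M + F M) ≤ Real.exp (a * Φ₁) * (M + F₂) := by
      apply mul_le_mul hlamhi (by linarith) (by linarith) (Real.exp_pos _).le
    have h3 : Real.exp (a * Φ₁) * (M + F₂) ≤ M := by nlinarith [hMe]
    linarith
  have := intermediate_value_Icc' hMpos.le hgc
  have h0mem : (0:ℝ) ∈ Icc (g M) (g 0) := ⟨hgM, hg0.le⟩
  obtain ⟨x, hxmem, hgx⟩ := this h0mem
  have hfix : Q x = x := by simp only [hg] at hgx; linarith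
  refine ⟨x, ?_, hfix⟩
  rcases hxmem.1.lt_or_eq with h | h
  · exact h
  · exfalso
    have : g x = 0 := by simp only [hg]; linarith
    rw [← h] at this; linarith
end

section
/- Let a < 0 and 0 < x_min < x_max be real numbers. Then the pair of equations x_min = λ·exp(a·T)/(1 − exp(a·T)) and x_max = λ/(1 − exp(a·T)) has a unique solution (T, λ) with T > 0 and λ > 0, given explicitly by T = (ln x_min − ln x_max)/a and λ = x_max − x_min. -/
open Real Set Filter

/-- The corridor-spanning 1-cycle parameters exist and are unique, given explicitly by
T = (ln x_min − ln x_max)/a and λ = x_max − x_min. -/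
theorem stmt3 (a xmin xmax : ℝ) (ha : a < 0) (h0 : 0 < xmin) (hlt : xmin < xmax) :
    (0 < (Real.log xmin - Real.log xmax) / a ∧ 0 < xmax - xmin ∧
      xmin = (xmax - xmin) * Real.exp (a * ((Real.log xmin - Real.log xmax) / a)) /
        (1 - Real.exp (a * ((Real.log xmin - Real.log xmax) / a))) ∧
      xmax = (xmax - xmin) /
        (1 - Real.exp (a * ((Real.log xmin - Real.log xmax) / a)))) ∧
    (∀ T lam : ℝ, 0 < T → 0 < lam →
      xmin = lam * Real.exp (a * T) / (1 - Real.exp (a * T)) →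
      xmax = lam / (1 - Real.exp (a * T)) →
      T = (Real.log xmin - Real.log xmax) / a ∧ lam = xmax - xmin) := by
  have hxmax : 0 < xmax := h0.trans hlt
  have hlog : Real.log xmin - Real.log xmax < 0 := by
    have := Real.log_lt_log h0 hlt
    linarith
  have ha' : a ≠ 0 := ne_of_lt ha
  have haT : a * ((Real.log xmin - Real.log xmax) / a) = Real.log xmin - Real.log xmax := by
    field_simp
  have hexp : Real.exp (a * ((Real.log xmin - Real.log xmax) / a)) = xmin / xmax := by
    rw [haT, Real.exp_sub, Real.exp_log h0, Real.exp_log hxmax]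
  have hdenom : 1 - xmin / xmax = (xmax - xmin) / xmax := by
    field_simp
  constructor
  · refine ⟨div_pos_of_neg_of_neg hlog ha, by linarith, ?_, ?_⟩
    · have hne : xmax - xmin ≠ 0 := by linarith
      rw [hexp, hdenom]
      field_simp
    · have hne : xmax - xmin ≠ 0 := by linarith
      rw [hexp, hdenom]
      field_simp
  · intro T lam hT hlam h1 h2
    have hexpT : Real.exp (a * T) < 1 := by
      rw [Real.exp_lt_one_iff]
      exact mul_neg_of_neg_of_pos ha hT
    have hd : 0 < 1 - Real.exp (a * T) := by linarith
    have e1 : xmin * (1 - Real.exp (a * T)) = lam * Real.exp (a * T) := by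
      field_simp at h1; linarith
    have e2 : xmax * (1 - Real.exp (a * T)) = lam := by
      field_simp at h2; linarith
    have hratio : Real.exp (a * T) = xmin / xmax := by
      have : xmin * (1 - Real.exp (a * T)) = xmax * (1 - Real.exp (a * T)) * Real.exp (a * T) := by
        rw [e2]; exact e1
      field_simp
      nlinarith [hd, Real.exp_pos (a * T)]
    have hlogT : a * T = Real.log xmin - Real.log xmax := by
      have := congrArg Real.log hratio
      rwa [Real.log_exp, Real.log_div (ne_of_gt h0) (ne_of_gt hxmax)] at this
    constructor
    · field_simp [eq_div_iff ha']
      linarith [hlogT]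
    · rw [hratio] at e2
      rw [← e2, hdenom]
      field_simp
end

section
/- For every x ≥ 0 the return map can be written as the convex combination Q(x) = exp(a·Φ(x))·x + (1 − exp(a·Φ(x)))·Ψ(x), where 0 < exp(a·Φ(x)) < 1; consequently Q(x) lies between x and Ψ(x), i.e. min(x, Ψ(x)) ≤ Q(x) ≤ max(x, Ψ(x)). -/
open Real Set Filter

lemma mul_add_eq_combo_of_ne_one {t : ℝ} (ht : t ≠ 1) (x f : ℝ) :
    t * (x + f) = t * x + (1 - t) * (f * t / (1 - t)) := by
  rw [mul_div_cancel₀ _ (sub_ne_zero.2 ht.symm)]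
  ring

theorem stmt9_general
    (a : ℝ) (ha : a < 0) (Φ F : ℝ → ℝ)
    (Φ₁ Φ₂ : ℝ) (hΦ₁ : 0 < Φ₁)
    (hΦb : ∀ x : ℝ, 0 ≤ x → Φ₁ ≤ Φ x ∧ Φ x ≤ Φ₂)
    (Q : ℝ → ℝ) (hQ : ∀ x : ℝ, Q x = Real.exp (a * Φ x) * (x + F x))
    (Ψ : ℝ → ℝ)
    (hΨ : ∀ x : ℝ, Ψ x = F x * Real.exp (a * Φ x) / (1 - Real.exp (a * Φ x))) :
    ∀ x : ℝ, 0 ≤ x →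
      Q x = Real.exp (a * Φ x) * x + (1 - Real.exp (a * Φ x)) * Ψ x ∧
      0 < Real.exp (a * Φ x) ∧ Real.exp (a * Φ x) < 1 ∧
      min x (Ψ x) ≤ Q x ∧ Q x ≤ max x (Ψ x) := by
  intro x hx
  have he0 : 0 < exp (a * Φ x) := exp_pos _
  have he1 : exp (a * Φ x) < 1 :=
    exp_lt_one_iff.mpr (mul_neg_of_neg_of_pos ha (hΦ₁.trans_le (hΦb x hx).1))
  have hconv : Q x = exp (a * Φ x) * x + (1 - exp (a * Φ x)) * Ψ x := by
    rw [hQ, hΨ, mul_add_eq_combo_of_ne_one he1.ne]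
  have hweights := add_sub_cancel (exp (a * Φ x)) 1
  refine ⟨hconv, he0, he1, ?_, ?_⟩ <;> rw [hconv]
  · exact Convex.min_le_combo x (Ψ x) he0.le (sub_nonneg.2 he1.le) hweights
  · exact Convex.combo_le_max x (Ψ x) he0.le (sub_nonneg.2 he1.le) hweights

/-- Q(x) is a convex combination of x and Ψ(x); in particular Q(x) lies between x and Ψ(x). -/
theorem stmt9
    (a : ℝ) (ha : a < 0) (Φ F : ℝ → ℝ)
    (hΦc : ContinuousOn Φ (Set.Ici 0)) (hFc : ContinuousOn F (Set.Ici 0))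
    (Φ₁ Φ₂ F₁ F₂ : ℝ) (hΦ₁ : 0 < Φ₁) (hF₁ : 0 < F₁)
    (hΦb : ∀ x : ℝ, 0 ≤ x → Φ₁ ≤ Φ x ∧ Φ x ≤ Φ₂)
    (hFb : ∀ x : ℝ, 0 ≤ x → F₁ ≤ F x ∧ F x ≤ F₂)
    (Q : ℝ → ℝ) (hQ : ∀ x : ℝ, Q x = Real.exp (a * Φ x) * (x + F x))
    (Ψ : ℝ → ℝ)
    (hΨ : ∀ x : ℝ, Ψ x = F x * Real.exp (a * Φ x) / (1 - Real.exp (a * Φ x))) :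
    ∀ x : ℝ, 0 ≤ x →
      Q x = Real.exp (a * Φ x) * x + (1 - Real.exp (a * Φ x)) * Ψ x ∧
      0 < Real.exp (a * Φ x) ∧ Real.exp (a * Φ x) < 1 ∧
      min x (Ψ x) ≤ Q x ∧ Q x ≤ max x (Ψ x) :=
  stmt9_general a ha Φ F Φ₁ Φ₂ hΦ₁ hΦb Q hQ Ψ hΨ
end

section
/- The sequence (m_n) is nondecreasing with m₀ = 0 < m₁, the sequence (M_n) defined by M_n = Ψ(m_n) is nonincreasing, and m_n ≤ M_n holds for every n ≥ 0. -/
open Real Set Filter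

/-- The sequence (m_n) is nondecreasing with m₀ = 0 < m₁, (M_n) = (Ψ(m_n)) is nonincreasing,
and m_n ≤ M_n for all n. -/
theorem stmt10
    (a : ℝ) (ha : a < 0) (Φ F : ℝ → ℝ)
    (hΦc : ContinuousOn Φ (Set.Ici 0)) (hFc : ContinuousOn F (Set.Ici 0))
    (Φ₁ Φ₂ F₁ F₂ : ℝ) (hΦ₁ : 0 < Φ₁) (hF₁ : 0 < F₁)
    (hΦb : ∀ x : ℝ, 0 ≤ x → Φ₁ ≤ Φ x ∧ Φ x ≤ Φ₂)
    (hFb : ∀ x : ℝ, 0 ≤ x → F₁ ≤ F x ∧ F x ≤ F₂)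
    (Q : ℝ → ℝ) (hQ : ∀ x : ℝ, Q x = Real.exp (a * Φ x) * (x + F x))
    (hΦm : MonotoneOn Φ (Set.Ici 0)) (hFm : AntitoneOn F (Set.Ici 0))
    (Ψ : ℝ → ℝ)
    (hΨ : ∀ x : ℝ, Ψ x = F x * Real.exp (a * Φ x) / (1 - Real.exp (a * Φ x)))
    (m : ℕ → ℝ) (hm0 : m 0 = 0) (hmrec : ∀ n : ℕ, m (n + 1) = Ψ (Ψ (m n))) :
    Monotone m ∧ m 0 < m 1 ∧
    Antitone (fun n : ℕ => Ψ (m n)) ∧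
    (∀ n : ℕ, m n ≤ Ψ (m n)) := by
  have hexp1 : ∀ x : ℝ, 0 ≤ x → Real.exp (a * Φ x) < 1 := by
    intro x hx
    have h1 : 0 < Φ x := lt_of_lt_of_le hΦ₁ (hΦb x hx).1
    have : a * Φ x < 0 := mul_neg_of_neg_of_pos ha h1
    calc Real.exp (a * Φ x) < Real.exp 0 := Real.exp_lt_exp.mpr this
    _ = 1 := Real.exp_zero
  have hΨpos : ∀ x : ℝ, 0 ≤ x → 0 < Ψ x := by
    intro x hx
    rw [hΨ]
    have hF : 0 < F x := lt_of_lt_of_le hF₁ (hFb x hx).1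
    have he : 0 < Real.exp (a * Φ x) := Real.exp_pos _
    have h1 : 0 < 1 - Real.exp (a * Φ x) := by linarith [hexp1 x hx]
    exact div_pos (mul_pos hF he) h1
  have hΨanti : ∀ x y : ℝ, 0 ≤ x → x ≤ y → Ψ y ≤ Ψ x := by
    intro x y hx hxy
    have hy : (0:ℝ) ≤ y := le_trans hx hxy
    rw [hΨ, hΨ]
    set ex := Real.exp (a * Φ x) with hex
    set ey := Real.exp (a * Φ y) with hey
    have hexpos : 0 < ex := Real.exp_pos _
    have heypos : 0 < ey := Real.exp_pos _
    have hex1 : 0 < 1 - ex := by have := hexp1 x hx; linarith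
    have hey1 : 0 < 1 - ey := by have := hexp1 y hy; linarith
    have hΦxy : Φ x ≤ Φ y := hΦm hx hy hxy
    have heyx : ey ≤ ex := by
      apply Real.exp_le_exp.mpr
      nlinarith
    have hdiv : ey / (1 - ey) ≤ ex / (1 - ex) := by
      rw [div_le_div_iff₀ hey1 hex1]
      nlinarith
    have hFxy : F y ≤ F x := hFm hx hy hxy
    have hFy : 0 < F y := lt_of_lt_of_le hF₁ (hFb y hy).1
    calc F y * ey / (1 - ey) = F y * (ey / (1 - ey)) := by ring
    _ ≤ F x * (ex / (1 - ex)) := by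
        apply mul_le_mul hFxy hdiv (div_nonneg heypos.le hey1.le) (le_trans hFy.le hFxy)
    _ = F x * ex / (1 - ex) := by ring
  have hnn : ∀ n, 0 ≤ m n := by
    intro n
    induction n with
    | zero => rw [hm0]
    | succ k ih =>
      rw [hmrec]
      exact (hΨpos _ (hΨpos _ ih).le).le
  have hstep : ∀ n, m n ≤ m (n + 1) := by
    intro n
    induction n with
    | zero =>
      rw [hm0, hmrec, hm0]
      exact (hΨpos _ (hΨpos _ le_rfl).le).le
    | succ k ih =>
      rw [hmrec, hmrec]
      exact hΨanti _ _ (hΨpos _ (hnn _)).le (hΨanti _ _ (hnn k) ih)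
  have hmono : Monotone m := monotone_nat_of_le_succ hstep
  have hmM : ∀ n, m n ≤ Ψ (m n) := by
    intro n
    induction n with
    | zero => rw [hm0]; exact (hΨpos 0 le_rfl).le
    | succ k ih =>
      have h1 : Ψ (Ψ (m k)) ≤ Ψ (m k) := hΨanti _ _ (hnn k) ih
      have h2 : Ψ (Ψ (m k)) ≤ Ψ (Ψ (Ψ (m k))) :=
        hΨanti _ _ (hΨpos _ (hΨpos _ (hnn k)).le).le h1
      rw [hmrec]
      exact h2
  refine ⟨hmono, ?_, ?_, hmM⟩
  · rw [hm0, hmrec, hm0]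
    exact hΨpos _ (hΨpos _ le_rfl).le
  · apply antitone_nat_of_succ_le
    intro n
    exact hΨanti _ _ (hnn n) (hstep n)
end

section
/- The limits m* = lim_{n→∞} m_n and M* = lim_{n→∞} M_n exist, satisfy 0 < m* ≤ M*, Ψ(m*) = M* and Ψ(M*) = m* (hence both m* and M* are fixed points of Ψ∘Ψ), and m* and M* are respectively the minimal and maximal nonnegative solutions of the equation x = Ψ(Ψ(x)): every x ≥ 0 with Ψ(Ψ(x)) = x satisfies m* ≤ x ≤ M*. -/
open Real Set Filter

/-- The limits m* = lim m_n and M* = lim M_n exist, satisfy 0 < m* ≤ M*, Ψ(m*) = M*,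
Ψ(M*) = m*, and are the minimal and maximal nonnegative solutions of x = Ψ(Ψ(x)). -/
theorem stmt11
    (a : ℝ) (ha : a < 0) (Φ F : ℝ → ℝ)
    (hΦc : ContinuousOn Φ (Set.Ici 0)) (hFc : ContinuousOn F (Set.Ici 0))
    (Φ₁ Φ₂ F₁ F₂ : ℝ) (hΦ₁ : 0 < Φ₁) (hF₁ : 0 < F₁)
    (hΦb : ∀ x : ℝ, 0 ≤ x → Φ₁ ≤ Φ x ∧ Φ x ≤ Φ₂)
    (hFb : ∀ x : ℝ, 0 ≤ x → F₁ ≤ F x ∧ F x ≤ F₂)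
    (Q : ℝ → ℝ) (hQ : ∀ x : ℝ, Q x = Real.exp (a * Φ x) * (x + F x))
    (hΦm : MonotoneOn Φ (Set.Ici 0)) (hFm : AntitoneOn F (Set.Ici 0))
    (Ψ : ℝ → ℝ)
    (hΨ : ∀ x : ℝ, Ψ x = F x * Real.exp (a * Φ x) / (1 - Real.exp (a * Φ x)))
    (m : ℕ → ℝ) (hm0 : m 0 = 0) (hmrec : ∀ n : ℕ, m (n + 1) = Ψ (Ψ (m n))) :
    ∃ mstar Mstar : ℝ,
      Filter.Tendsto m Filter.atTop (nhds mstar) ∧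
      Filter.Tendsto (fun n : ℕ => Ψ (m n)) Filter.atTop (nhds Mstar) ∧
      0 < mstar ∧ mstar ≤ Mstar ∧
      Ψ mstar = Mstar ∧ Ψ Mstar = mstar ∧
      Ψ (Ψ mstar) = mstar ∧ Ψ (Ψ Mstar) = Mstar ∧
      (∀ x : ℝ, 0 ≤ x → Ψ (Ψ x) = x → mstar ≤ x ∧ x ≤ Mstar) := by
  -- basic facts about the exponential term
  have hexp : ∀ x : ℝ, 0 ≤ x → Real.exp (a * Φ x) < 1 := by
    intro x hx
    have hΦx : 0 < Φ x := lt_of_lt_of_le hΦ₁ (hΦb x hx).1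
    have : a * Φ x < 0 := mul_neg_of_neg_of_pos ha hΦx
    simpa using Real.exp_lt_one_iff.mpr this
  have hFpos : ∀ x : ℝ, 0 ≤ x → 0 < F x := fun x hx => lt_of_lt_of_le hF₁ (hFb x hx).1
  -- positivity of Ψ
  have hΨpos : ∀ x : ℝ, 0 ≤ x → 0 < Ψ x := by
    intro x hx
    rw [hΨ x]
    have h1 : 0 < 1 - Real.exp (a * Φ x) := by linarith [hexp x hx]
    have h2 : 0 < F x := hFpos x hx
    positivity
  -- antitonicity of Ψ on [0,∞)
  have hΨanti : ∀ x y : ℝ, 0 ≤ x → x ≤ y → Ψ y ≤ Ψ x := by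
    intro x y hx hxy
    have hy : (0:ℝ) ≤ y := le_trans hx hxy
    rw [hΨ x, hΨ y]
    set ex := Real.exp (a * Φ x) with hexdef
    set ey := Real.exp (a * Φ y) with heydef
    have hexpos : 0 < ex := Real.exp_pos _
    have heypos : 0 < ey := Real.exp_pos _
    have hex1 : ex < 1 := hexp x hx
    have hey1 : ey < 1 := hexp y hy
    have heyx : ey ≤ ex := by
      apply Real.exp_le_exp.mpr
      have hΦxy := hΦm hx hy hxy
      nlinarith
    have hFyx : F y ≤ F x := hFm hx hy hxy
    have hFy : 0 < F y := hFpos y hy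
    rw [div_le_div_iff₀ (by linarith) (by linarith)]
    nlinarith [mul_le_mul hFyx heyx heypos.le (hFpos x hx).le,
      mul_nonneg (mul_nonneg hFy.le heypos.le) (sub_nonneg.mpr heyx)]
  -- continuity of Ψ on [0,∞)
  have hΨeqfun : Ψ = fun x => F x * Real.exp (a * Φ x) / (1 - Real.exp (a * Φ x)) :=
    funext hΨ
  have hΨcont : ContinuousOn Ψ (Set.Ici 0) := by
    rw [hΨeqfun]
    apply ContinuousOn.div
    · exact hFc.mul (Real.continuous_exp.comp_continuousOn (continuousOn_const.mul hΦc))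
    · exact continuousOn_const.sub
        (Real.continuous_exp.comp_continuousOn (continuousOn_const.mul hΦc))
    · intro x hx
      have := hexp x hx
      intro h
      rw [sub_eq_zero] at h
      exact absurd h.symm (ne_of_lt this)
  -- nonnegativity of the sequence
  have hmnn : ∀ n : ℕ, 0 ≤ m n := by
    intro n
    induction n with
    | zero => rw [hm0]
    | succ k ih => rw [hmrec k]; exact (hΨpos _ (hΨpos _ ih).le).le
  -- Ψ∘Ψ is monotone on [0,∞)
  have hΨΨmono : ∀ x y : ℝ, 0 ≤ x → x ≤ y → Ψ (Ψ x) ≤ Ψ (Ψ y) := by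
    intro x y hx hxy
    exact hΨanti _ _ (hΨpos y (le_trans hx hxy)).le (hΨanti x y hx hxy)
  -- m is monotone
  have hmle : ∀ n : ℕ, m n ≤ m (n + 1) := by
    intro n
    induction n with
    | zero => rw [hm0, hmrec 0]; exact (hΨpos _ (hΨpos _ (by rw [hm0])).le).le
    | succ k ih =>
      rw [hmrec k, hmrec (k + 1)]
      exact hΨΨmono _ _ (hmnn k) ih
  have hmmono : Monotone m := monotone_nat_of_le_succ hmle
  -- m is bounded above by Ψ 0
  have hmbdd : ∀ n : ℕ, m n ≤ Ψ 0 := by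
    intro n
    cases n with
    | zero => rw [hm0]; exact (hΨpos 0 le_rfl).le
    | succ k => rw [hmrec k]; exact hΨanti 0 _ le_rfl (hΨpos _ (hmnn k)).le
  -- the limit mstar
  set mstar := ⨆ n, m n with hmstardef
  have hbdd : BddAbove (Set.range m) := ⟨Ψ 0, by rintro _ ⟨n, rfl⟩; exact hmbdd n⟩
  have hmlim : Filter.Tendsto m Filter.atTop (nhds mstar) :=
    tendsto_atTop_ciSup hmmono hbdd
  have hmle_star : ∀ n, m n ≤ mstar := fun n => le_ciSup hbdd n
  have hmstar_nn : 0 ≤ mstar := le_trans (hmnn 0) (hmle_star 0)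
  have hmstar_pos : 0 < mstar := by
    have h1 : 0 < m 1 := by rw [hmrec 0]; exact hΨpos _ (hΨpos _ (by rw [hm0])).le
    exact lt_of_lt_of_le h1 (hmle_star 1)
  -- convergence of m within Ici 0
  have hmlim' : Filter.Tendsto m Filter.atTop (nhdsWithin mstar (Set.Ici 0)) := by
    rw [tendsto_nhdsWithin_iff]
    exact ⟨hmlim, Filter.Eventually.of_forall fun n => hmnn n⟩
  -- M_n = Ψ (m n) tends to Ψ mstar
  have hMlim : Filter.Tendsto (fun n : ℕ => Ψ (m n)) Filter.atTop (nhds (Ψ mstar)) :=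
    ((hΨcont mstar hmstar_nn).tendsto).comp hmlim'
  -- Ψ (m n) tends to Ψ mstar within Ici 0
  have hMlim' : Filter.Tendsto (fun n : ℕ => Ψ (m n)) Filter.atTop
      (nhdsWithin (Ψ mstar) (Set.Ici 0)) := by
    rw [tendsto_nhdsWithin_iff]
    exact ⟨hMlim, Filter.Eventually.of_forall fun n => (hΨpos _ (hmnn n)).le⟩
  have hΨmstar_nn : 0 ≤ Ψ mstar := (hΨpos _ hmstar_nn).le
  -- Ψ (Ψ (m n)) tends to Ψ (Ψ mstar)
  have hΨΨlim : Filter.Tendsto (fun n : ℕ => Ψ (Ψ (m n))) Filter.atTop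
      (nhds (Ψ (Ψ mstar))) :=
    ((hΨcont _ hΨmstar_nn).tendsto).comp hMlim'
  -- fixed point equation: Ψ (Ψ mstar) = mstar
  have hfix : Ψ (Ψ mstar) = mstar := by
    have h1 : Filter.Tendsto (fun n : ℕ => m (n + 1)) Filter.atTop (nhds mstar) :=
      hmlim.comp (Filter.tendsto_add_atTop_nat 1)
    have h2 : Filter.Tendsto (fun n : ℕ => m (n + 1)) Filter.atTop
        (nhds (Ψ (Ψ mstar))) := by
      have : (fun n : ℕ => m (n + 1)) = fun n : ℕ => Ψ (Ψ (m n)) := funext hmrec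
      rw [this]; exact hΨΨlim
    exact tendsto_nhds_unique h2 h1
  -- the invariant m n ≤ Ψ (m n)
  have hinv : ∀ n : ℕ, m n ≤ Ψ (m n) := by
    intro n
    induction n with
    | zero => rw [hm0]; exact (hΨpos 0 le_rfl).le
    | succ k ih =>
      have hk := hmnn k
      have h1 : m (k + 1) ≤ Ψ (m k) := by
        rw [hmrec k]
        exact hΨanti _ _ hk ih
      have h2 : Ψ (Ψ (m k)) ≤ Ψ (m (k + 1)) := hΨanti _ _ (hmnn (k + 1)) h1
      calc m (k + 1) = Ψ (Ψ (m k)) := hmrec k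
      _ ≤ Ψ (m (k + 1)) := h2
  -- mstar ≤ Ψ mstar
  have hmM : mstar ≤ Ψ mstar :=
    le_of_tendsto_of_tendsto' hmlim hMlim hinv
  refine ⟨mstar, Ψ mstar, hmlim, hMlim, hmstar_pos, hmM, rfl, hfix, hfix, ?_, ?_⟩
  · -- Ψ (Ψ (Ψ mstar)) = Ψ mstar
    rw [hfix]
  · -- minimality and maximality
    intro x hx hfx
    have hΨx_nn : 0 ≤ Ψ x := (hΨpos x hx).le
    -- m n ≤ x and m n ≤ Ψ x for all n
    have hkey : ∀ n : ℕ, m n ≤ x ∧ m n ≤ Ψ x := by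
      intro n
      induction n with
      | zero => rw [hm0]; exact ⟨hx, hΨx_nn⟩
      | succ k ih =>
        constructor
        · rw [hmrec k, ← hfx]
          exact hΨΨmono _ _ (hmnn k) ih.1
        · rw [hmrec k]
          have : Ψ (Ψ (Ψ x)) = Ψ x := by rw [hfx]
          rw [← this]
          exact hΨΨmono _ _ (hmnn k) ih.2
    constructor
    · exact ciSup_le fun n => (hkey n).1
    · -- x ≤ Ψ mstar : use x ≤ Ψ (m n) for all n
      have hxle : ∀ n : ℕ, x ≤ Ψ (m n) := by
        intro n
        calc x = Ψ (Ψ x) := hfx.symm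
        _ ≤ Ψ (m n) := hΨanti _ _ (hmnn n) (hkey n).2
      exact ge_of_tendsto hMlim (Filter.Eventually.of_forall hxle)
end

section
/- For every n ≥ 0, the interval [m_n, M_n] is forward invariant under the return map Q: if m_n ≤ x ≤ M_n then m_n ≤ Q(x) ≤ M_n. Consequently the interval [m*, M*], where m* = lim m_n and M* = lim M_n, is also forward invariant under Q. -/
/-!
Write `e x = exp (a Φ x) ∈ (0, 1)`. Then `Q x = e x • x + (1 - e x) • Ψ x` lies on the segment
between `x` and `Ψ x`, so any interval mapped into itself by `Ψ` is mapped into itself by `Q`.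
Negative feedback makes `Ψ` antitone, hence `Ψ ∘ Ψ` monotone: `m` increases, `M = Ψ ∘ m`
decreases, and the antitone `Ψ` swaps the endpoints of `[m_n, Ψ m_n]` while `m_n ≤ Ψ (Ψ m_n)`.
Forward invariance of `[m*, M*]` follows by passing to the limit in `m_n ≤ Q x ≤ M_n`.
-/

open Real Set Filter

theorem monotone_of_succ_eq_of_monotoneOn {α : Type*} [Preorder α] {h : α → α} {s : Set α}
    (hh : MonotoneOn h s) (hs : MapsTo h s s) {m : ℕ → α} (hm₀ : m 0 ∈ s) (hm₀₁ : m 0 ≤ m 1)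
    (hm : ∀ n, m (n + 1) = h (m n)) : Monotone m := by
  have key : ∀ n, m n ∈ s ∧ m n ≤ m (n + 1) := by
    intro n
    induction n with
    | zero => exact ⟨hm₀, hm₀₁⟩
    | succ n ih =>
      have hs' : m (n + 1) ∈ s := hm n ▸ hs ih.1
      exact ⟨hs', by rw [hm n, hm (n + 1)]; exact hh ih.1 hs' ih.2⟩
  exact monotone_nat_of_le_succ fun n => (key n).2

theorem AntitoneOn.mapsTo_Icc_self {α : Type*} [Preorder α] {g : α → α} {c m : α}
    (hg : AntitoneOn g (Ici c)) (hm : c ≤ m) (hmg : m ≤ g (g m)) :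
    MapsTo g (Icc m (g m)) (Icc m (g m)) := by
  rintro x ⟨hmx, hxg⟩
  have hx : c ≤ x := hm.trans hmx
  exact ⟨hmg.trans (hg hx (hx.trans hxg) hxg), hg hm hx hmx⟩

theorem mapsTo_Icc_of_tendsto {α : Type*} [TopologicalSpace α] [Preorder α]
    [OrderClosedTopology α] {f : α → α} {m M : ℕ → α} (hm : Monotone m) (hM : Antitone M)
    (hf : ∀ n, MapsTo f (Icc (m n) (M n)) (Icc (m n) (M n))) {mstar Mstar : α}
    (hmt : Tendsto m atTop (nhds mstar)) (hMt : Tendsto M atTop (nhds Mstar)) :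
    MapsTo f (Icc mstar Mstar) (Icc mstar Mstar) := by
  intro x hx
  have hfx : ∀ n, f x ∈ Icc (m n) (M n) := fun n =>
    hf n ⟨(hm.ge_of_tendsto hmt n).trans hx.1, hx.2.trans (hM.le_of_tendsto hMt n)⟩
  exact ⟨le_of_tendsto' hmt fun n => (hfx n).1, ge_of_tendsto' hMt fun n => (hfx n).2⟩

section ImpulsiveSystem

variable {a : ℝ} {Φ F Ψ : ℝ → ℝ}

theorem exp_mul_lt_one (ha : a < 0) {t : ℝ} (ht : 0 < t) : exp (a * t) < 1 :=
  exp_lt_one_iff.2 (mul_neg_of_neg_of_pos ha ht)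

theorem mapsTo_Ici_zero_of_eq_mul_exp_div (ha : a < 0) (hΦ : ∀ x, 0 ≤ x → 0 < Φ x)
    (hF : ∀ x, 0 ≤ x → 0 ≤ F x)
    (hΨ : ∀ x, Ψ x = F x * exp (a * Φ x) / (1 - exp (a * Φ x))) :
    MapsTo Ψ (Ici 0) (Ici 0) := by
  intro x hx
  rw [mem_Ici, hΨ]
  have := exp_mul_lt_one ha (hΦ x hx)
  exact div_nonneg (mul_nonneg (hF x hx) (exp_pos _).le) (by linarith)

theorem antitoneOn_of_eq_mul_exp_div (ha : a < 0) (hΦ : ∀ x, 0 ≤ x → 0 < Φ x)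
    (hF : ∀ x, 0 ≤ x → 0 ≤ F x) (hΦm : MonotoneOn Φ (Ici 0)) (hFm : AntitoneOn F (Ici 0))
    (hΨ : ∀ x, Ψ x = F x * exp (a * Φ x) / (1 - exp (a * Φ x))) :
    AntitoneOn Ψ (Ici 0) := by
  intro x hx y hy hxy
  have hexp : exp (a * Φ y) ≤ exp (a * Φ x) :=
    exp_le_exp.2 (mul_le_mul_of_nonpos_left (hΦm hx hy hxy) ha.le)
  have hx1 := exp_mul_lt_one ha (hΦ x hx)
  have hFx := hF x hx
  have hFxy : F y ≤ F x := hFm hx hy hxy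
  rw [hΨ, hΨ]
  gcongr

theorem mem_segment_of_eq_exp_mul (ha : a < 0) (hΦ : ∀ x, 0 ≤ x → 0 < Φ x) {Q : ℝ → ℝ}
    (hQ : ∀ x, Q x = exp (a * Φ x) * (x + F x))
    (hΨ : ∀ x, Ψ x = F x * exp (a * Φ x) / (1 - exp (a * Φ x))) {x : ℝ} (hx : 0 ≤ x) :
    Q x ∈ segment ℝ x (Ψ x) := by
  have hlt := exp_mul_lt_one ha (hΦ x hx)
  refine ⟨exp (a * Φ x), 1 - exp (a * Φ x), (exp_pos _).le, by linarith, by ring, ?_⟩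
  have hne : 1 - exp (a * Φ x) ≠ 0 := by linarith
  rw [hQ, hΨ, smul_eq_mul, smul_eq_mul]
  field_simp

end ImpulsiveSystem

theorem stmt12_general
    (a : ℝ) (ha : a < 0) (Φ F : ℝ → ℝ)
    (Φ₁ Φ₂ F₁ F₂ : ℝ) (hΦ₁ : 0 < Φ₁) (hF₁ : 0 < F₁)
    (hΦb : ∀ x : ℝ, 0 ≤ x → Φ₁ ≤ Φ x ∧ Φ x ≤ Φ₂)
    (hFb : ∀ x : ℝ, 0 ≤ x → F₁ ≤ F x ∧ F x ≤ F₂)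
    (Q : ℝ → ℝ) (hQ : ∀ x : ℝ, Q x = Real.exp (a * Φ x) * (x + F x))
    (hΦm : MonotoneOn Φ (Set.Ici 0)) (hFm : AntitoneOn F (Set.Ici 0))
    (Ψ : ℝ → ℝ)
    (hΨ : ∀ x : ℝ, Ψ x = F x * Real.exp (a * Φ x) / (1 - Real.exp (a * Φ x)))
    (m : ℕ → ℝ) (hm0 : m 0 = 0) (hmrec : ∀ n : ℕ, m (n + 1) = Ψ (Ψ (m n))) :
    (∀ n : ℕ, ∀ x ∈ Set.Icc (m n) (Ψ (m n)), Q x ∈ Set.Icc (m n) (Ψ (m n))) ∧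
    (∀ mstar Mstar : ℝ,
      Filter.Tendsto m Filter.atTop (nhds mstar) →
      Filter.Tendsto (fun n : ℕ => Ψ (m n)) Filter.atTop (nhds Mstar) →
      ∀ x ∈ Set.Icc mstar Mstar, Q x ∈ Set.Icc mstar Mstar) := by
  have hΦ : ∀ x, 0 ≤ x → 0 < Φ x := fun x hx => hΦ₁.trans_le (hΦb x hx).1
  have hF : ∀ x, 0 ≤ x → 0 ≤ F x := fun x hx => hF₁.le.trans (hFb x hx).1
  have hΨmaps := mapsTo_Ici_zero_of_eq_mul_exp_div ha hΦ hF hΨ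
  have hΨanti := antitoneOn_of_eq_mul_exp_div ha hΦ hF hΦm hFm hΨ
  have hm_mono : Monotone m :=
    monotone_of_succ_eq_of_monotoneOn (hΨanti.comp hΨanti hΨmaps) (hΨmaps.comp hΨmaps)
      (hm0 ▸ self_mem_Ici) (by rw [hmrec, hm0]; exact hΨmaps (hΨmaps self_mem_Ici)) hmrec
  have hm_nonneg : ∀ n, 0 ≤ m n := fun n => hm0 ▸ hm_mono (Nat.zero_le n)
  have hM_anti : Antitone (Ψ ∘ m) := fun i j hij =>
    hΨanti (hm_nonneg i) (hm_nonneg j) (hm_mono hij)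
  have hinv : ∀ n, MapsTo Q (Icc (m n) (Ψ (m n))) (Icc (m n) (Ψ (m n))) := fun n x hx =>
    (convex_Icc _ _).segment_subset hx
      (hΨanti.mapsTo_Icc_self (hm_nonneg n) (hmrec n ▸ hm_mono n.le_succ) hx)
      (mem_segment_of_eq_exp_mul ha hΦ hQ hΨ ((hm_nonneg n).trans hx.1))
  exact ⟨hinv, fun _ _ hmt hMt => mapsTo_Icc_of_tendsto hm_mono hM_anti hinv hmt hMt⟩

/-- Each interval [m_n, M_n] is forward invariant under Q, and consequently so is [m*, M*]. -/
theorem stmt12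
    (a : ℝ) (ha : a < 0) (Φ F : ℝ → ℝ)
    (hΦc : ContinuousOn Φ (Set.Ici 0)) (hFc : ContinuousOn F (Set.Ici 0))
    (Φ₁ Φ₂ F₁ F₂ : ℝ) (hΦ₁ : 0 < Φ₁) (hF₁ : 0 < F₁)
    (hΦb : ∀ x : ℝ, 0 ≤ x → Φ₁ ≤ Φ x ∧ Φ x ≤ Φ₂)
    (hFb : ∀ x : ℝ, 0 ≤ x → F₁ ≤ F x ∧ F x ≤ F₂)
    (Q : ℝ → ℝ) (hQ : ∀ x : ℝ, Q x = Real.exp (a * Φ x) * (x + F x))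
    (hΦm : MonotoneOn Φ (Set.Ici 0)) (hFm : AntitoneOn F (Set.Ici 0))
    (Ψ : ℝ → ℝ)
    (hΨ : ∀ x : ℝ, Ψ x = F x * Real.exp (a * Φ x) / (1 - Real.exp (a * Φ x)))
    (m : ℕ → ℝ) (hm0 : m 0 = 0) (hmrec : ∀ n : ℕ, m (n + 1) = Ψ (Ψ (m n))) :
    (∀ n : ℕ, ∀ x ∈ Set.Icc (m n) (Ψ (m n)), Q x ∈ Set.Icc (m n) (Ψ (m n))) ∧
    (∀ mstar Mstar : ℝ,
      Filter.Tendsto m Filter.atTop (nhds mstar) →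
      Filter.Tendsto (fun n : ℕ => Ψ (m n)) Filter.atTop (nhds Mstar) →
      ∀ x ∈ Set.Icc mstar Mstar, Q x ∈ Set.Icc mstar Mstar) :=
  stmt12_general a ha Φ F Φ₁ Φ₂ F₁ F₂ hΦ₁ hF₁ hΦb hFb Q hQ hΦm hFm Ψ hΨ m hm0 hmrec
end

section
/- Let (x_n) be any sequence in [0,∞) satisfying x_{n+1} = Q(x_n), and suppose that ℓ = liminf_{n→∞} x_n and L = limsup_{n→∞} x_n satisfy 0 < ℓ ≤ L < ∞. Then L ≤ Ψ(ℓ) and Ψ(L) ≤ ℓ. -/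
open Real Set Filter

/-- For any orbit of Q in [0,∞) with 0 < ℓ = liminf x_n ≤ L = limsup x_n < ∞,
one has L ≤ Ψ(ℓ) and Ψ(L) ≤ ℓ. -/
theorem stmt13
    (a : ℝ) (ha : a < 0) (Φ F : ℝ → ℝ)
    (hΦc : ContinuousOn Φ (Set.Ici 0)) (hFc : ContinuousOn F (Set.Ici 0))
    (Φ₁ Φ₂ F₁ F₂ : ℝ) (hΦ₁ : 0 < Φ₁) (hF₁ : 0 < F₁)
    (hΦb : ∀ x : ℝ, 0 ≤ x → Φ₁ ≤ Φ x ∧ Φ x ≤ Φ₂)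
    (hFb : ∀ x : ℝ, 0 ≤ x → F₁ ≤ F x ∧ F x ≤ F₂)
    (Q : ℝ → ℝ) (hQ : ∀ x : ℝ, Q x = Real.exp (a * Φ x) * (x + F x))
    (hΦm : MonotoneOn Φ (Set.Ici 0)) (hFm : AntitoneOn F (Set.Ici 0))
    (Ψ : ℝ → ℝ)
    (hΨ : ∀ x : ℝ, Ψ x = F x * Real.exp (a * Φ x) / (1 - Real.exp (a * Φ x)))
    (x : ℕ → ℝ) (hxnn : ∀ n : ℕ, 0 ≤ x n) (hrec : ∀ n : ℕ, x (n + 1) = Q (x n))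
    (hbd : Filter.IsBoundedUnder (· ≤ ·) Filter.atTop x)
    (ℓ L : ℝ) (hℓ : ℓ = Filter.liminf x Filter.atTop)
    (hL : L = Filter.limsup x Filter.atTop)
    (hℓpos : 0 < ℓ) (hℓL : ℓ ≤ L) :
    L ≤ Ψ ℓ ∧ Ψ L ≤ ℓ := by
  have hℓ0 : (0:ℝ) ≤ ℓ := hℓpos.le
  have hL0 : (0:ℝ) ≤ L := le_trans hℓ0 hℓL
  have hbdge : Filter.IsBoundedUnder (· ≥ ·) Filter.atTop x :=
    Filter.isBoundedUnder_of ⟨0, fun n => hxnn n⟩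
  have hcob_le : Filter.IsCoboundedUnder (· ≤ ·) Filter.atTop x :=
    hbdge.isCoboundedUnder_le
  have hcob_ge : Filter.IsCoboundedUnder (· ≥ ·) Filter.atTop x :=
    hbd.isCoboundedUnder_ge
  have shift : ∀ (P : ℝ → Prop), (∀ᶠ n in Filter.atTop, P (x (n+1))) →
      (∀ᶠ n in Filter.atTop, P (x n)) := by
    intro P h
    rw [Filter.eventually_atTop] at h ⊢
    obtain ⟨N, hN⟩ := h
    refine ⟨N+1, fun n hn => ?_⟩
    obtain ⟨m, rfl⟩ : ∃ m, n = m + 1 := ⟨n - 1, by omega⟩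
    exact hN m (by omega)
  -- Key inequality A
  have keyA : ∀ ε : ℝ, ε ∈ Set.Ioo 0 ℓ →
      L ≤ Real.exp (a * Φ (ℓ - ε)) * (L + ε + F (ℓ - ε)) := by
    intro ε hε
    have ht0 : (0:ℝ) ≤ ℓ - ε := by linarith [hε.2]
    have hub : ∀ᶠ n in Filter.atTop, x n < L + ε :=
      Filter.eventually_lt_of_limsup_lt (by rw [← hL]; linarith [hε.1]) hbd
    have hlb : ∀ᶠ n in Filter.atTop, ℓ - ε < x n :=
      Filter.eventually_lt_of_lt_liminf (by rw [← hℓ]; linarith [hε.1]) hbdge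
    have hkey : ∀ᶠ n in Filter.atTop,
        x n ≤ Real.exp (a * Φ (ℓ - ε)) * (L + ε + F (ℓ - ε)) := by
      apply shift (fun y => y ≤ Real.exp (a * Φ (ℓ - ε)) * (L + ε + F (ℓ - ε)))
      filter_upwards [hub, hlb] with n h1 h2
      have hx0 : (0:ℝ) ≤ x n := hxnn n
      have hΦle : Φ (ℓ - ε) ≤ Φ (x n) := hΦm ht0 hx0 h2.le
      have hFle : F (x n) ≤ F (ℓ - ε) := hFm ht0 hx0 h2.le
      have hF0 : 0 < F (x n) := lt_of_lt_of_le hF₁ (hFb _ hx0).1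
      have he : Real.exp (a * Φ (x n)) ≤ Real.exp (a * Φ (ℓ - ε)) :=
        Real.exp_le_exp.mpr (mul_le_mul_of_nonpos_left hΦle ha.le)
      rw [hrec n, hQ]
      calc Real.exp (a * Φ (x n)) * (x n + F (x n))
          ≤ Real.exp (a * Φ (ℓ - ε)) * (x n + F (ℓ - ε)) :=
            mul_le_mul he (by linarith) (by linarith) (Real.exp_nonneg _)
        _ ≤ Real.exp (a * Φ (ℓ - ε)) * (L + ε + F (ℓ - ε)) :=
            mul_le_mul_of_nonneg_left (by linarith) (Real.exp_nonneg _)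
    have h := Filter.limsup_le_of_le hcob_le hkey
    rwa [← hL] at h
  -- Key inequality B
  have keyB : ∀ ε : ℝ, ε ∈ Set.Ioo 0 ℓ →
      Real.exp (a * Φ (L + ε)) * (ℓ - ε + F (L + ε)) ≤ ℓ := by
    intro ε hε
    have hLε0 : (0:ℝ) ≤ L + ε := by linarith [hε.1]
    have hFL0 : 0 < F (L + ε) := lt_of_lt_of_le hF₁ (hFb _ hLε0).1
    have hub : ∀ᶠ n in Filter.atTop, x n < L + ε :=
      Filter.eventually_lt_of_limsup_lt (by rw [← hL]; linarith [hε.1]) hbd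
    have hlb : ∀ᶠ n in Filter.atTop, ℓ - ε < x n :=
      Filter.eventually_lt_of_lt_liminf (by rw [← hℓ]; linarith [hε.1]) hbdge
    have hkey : ∀ᶠ n in Filter.atTop,
        Real.exp (a * Φ (L + ε)) * (ℓ - ε + F (L + ε)) ≤ x n := by
      apply shift (fun y => Real.exp (a * Φ (L + ε)) * (ℓ - ε + F (L + ε)) ≤ y)
      filter_upwards [hub, hlb] with n h1 h2
      have hx0 : (0:ℝ) ≤ x n := hxnn n
      have hΦle : Φ (x n) ≤ Φ (L + ε) := hΦm hx0 hLε0 h1.le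
      have hFle : F (L + ε) ≤ F (x n) := hFm hx0 hLε0 h1.le
      have he : Real.exp (a * Φ (L + ε)) ≤ Real.exp (a * Φ (x n)) :=
        Real.exp_le_exp.mpr (mul_le_mul_of_nonpos_left hΦle ha.le)
      rw [hrec n, hQ]
      exact mul_le_mul he (by linarith [hε.2, hε.1])
        (by linarith [hε.2]) (Real.exp_nonneg _)
    have h := Filter.le_liminf_of_le hcob_ge hkey
    rwa [← hℓ] at h
  have hmem : Set.Ioo (0:ℝ) ℓ ∈ nhdsWithin (0:ℝ) (Set.Ioi 0) :=
    Ioo_mem_nhdsGT_of_mem ⟨le_refl 0, hℓpos⟩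
  have hId : Filter.Tendsto (fun ε : ℝ => ε) (nhdsWithin (0:ℝ) (Set.Ioi 0)) (nhds (0:ℝ)) :=
    tendsto_id.mono_left nhdsWithin_le_nhds
  -- Limit A
  have hA : L ≤ Real.exp (a * Φ ℓ) * (L + F ℓ) := by
    have htsub : Filter.Tendsto (fun ε : ℝ => ℓ - ε) (nhdsWithin (0:ℝ) (Set.Ioi 0))
        (nhdsWithin ℓ (Set.Ici 0)) := by
      apply tendsto_nhdsWithin_of_tendsto_nhds_of_eventually_within
      · have h1 : Filter.Tendsto (fun ε : ℝ => ℓ - ε) (nhds (0:ℝ)) (nhds (ℓ - 0)) :=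
          tendsto_const_nhds.sub tendsto_id
        simpa using h1.mono_left nhdsWithin_le_nhds
      · filter_upwards [hmem] with ε hε
        exact Set.mem_Ici.mpr (by linarith [hε.2])
    have hΦt : Filter.Tendsto (fun ε : ℝ => Φ (ℓ - ε)) (nhdsWithin (0:ℝ) (Set.Ioi 0))
        (nhds (Φ ℓ)) := (hΦc ℓ hℓ0).tendsto.comp htsub
    have hFt : Filter.Tendsto (fun ε : ℝ => F (ℓ - ε)) (nhdsWithin (0:ℝ) (Set.Ioi 0))
        (nhds (F ℓ)) := (hFc ℓ hℓ0).tendsto.comp htsub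
    have hfull : Filter.Tendsto
        (fun ε : ℝ => Real.exp (a * Φ (ℓ - ε)) * (L + ε + F (ℓ - ε)))
        (nhdsWithin (0:ℝ) (Set.Ioi 0)) (nhds (Real.exp (a * Φ ℓ) * (L + F ℓ))) := by
      have hc : Filter.Tendsto (fun _ : ℝ => L) (nhdsWithin (0:ℝ) (Set.Ioi 0)) (nhds L) :=
        tendsto_const_nhds
      have h1 := ((Real.continuous_exp.tendsto _).comp (hΦt.const_mul a)).mul
        ((hc.add hId).add hFt)
      simpa [Function.comp] using h1
    exact ge_of_tendsto hfull (by filter_upwards [hmem] with ε hε using keyA ε hε)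
  -- Limit B
  have hB : Real.exp (a * Φ L) * (ℓ + F L) ≤ ℓ := by
    have htsub : Filter.Tendsto (fun ε : ℝ => L + ε) (nhdsWithin (0:ℝ) (Set.Ioi 0))
        (nhdsWithin L (Set.Ici 0)) := by
      apply tendsto_nhdsWithin_of_tendsto_nhds_of_eventually_within
      · have h1 : Filter.Tendsto (fun ε : ℝ => L + ε) (nhds (0:ℝ)) (nhds (L + 0)) :=
          tendsto_const_nhds.add tendsto_id
        simpa using h1.mono_left nhdsWithin_le_nhds
      · filter_upwards [hmem] with ε hε
        exact Set.mem_Ici.mpr (by linarith [hε.1])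
    have hΦt : Filter.Tendsto (fun ε : ℝ => Φ (L + ε)) (nhdsWithin (0:ℝ) (Set.Ioi 0))
        (nhds (Φ L)) := (hΦc L hL0).tendsto.comp htsub
    have hFt : Filter.Tendsto (fun ε : ℝ => F (L + ε)) (nhdsWithin (0:ℝ) (Set.Ioi 0))
        (nhds (F L)) := (hFc L hL0).tendsto.comp htsub
    have hfull : Filter.Tendsto
        (fun ε : ℝ => Real.exp (a * Φ (L + ε)) * (ℓ - ε + F (L + ε)))
        (nhdsWithin (0:ℝ) (Set.Ioi 0)) (nhds (Real.exp (a * Φ L) * (ℓ + F L))) := by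
      have hc : Filter.Tendsto (fun _ : ℝ => ℓ) (nhdsWithin (0:ℝ) (Set.Ioi 0)) (nhds ℓ) :=
        tendsto_const_nhds
      have h1 := ((Real.continuous_exp.tendsto _).comp (hΦt.const_mul a)).mul
        ((hc.sub hId).add hFt)
      simpa [Function.comp] using h1
    exact le_of_tendsto hfull (by filter_upwards [hmem] with ε hε using keyB ε hε)
  -- Final algebra
  have hΦℓpos : 0 < Φ ℓ := lt_of_lt_of_le hΦ₁ (hΦb ℓ hℓ0).1
  have hΦLpos : 0 < Φ L := lt_of_lt_of_le hΦ₁ (hΦb L hL0).1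
  have hE1 : Real.exp (a * Φ ℓ) < 1 := by
    rw [Real.exp_lt_one_iff]
    exact mul_neg_of_neg_of_pos ha hΦℓpos
  have hE1' : Real.exp (a * Φ L) < 1 := by
    rw [Real.exp_lt_one_iff]
    exact mul_neg_of_neg_of_pos ha hΦLpos
  constructor
  · rw [hΨ, le_div_iff₀ (by linarith)]
    nlinarith [hA]
  · rw [hΨ, div_le_iff₀ (by linarith)]
    nlinarith [hB]
end

section
/- The interval [m*, M*] is a global attractor for the discrete-time system x_{n+1} = Q(x_n): for every initial condition x₀ ≥ 0, the resulting sequence satisfies m* ≤ liminf_{n→∞} x_n ≤ limsup_{n→∞} x_n ≤ M*, where m* = lim m_n and M* = lim M_n are the minimal and maximal nonnegative solutions of x = Ψ(Ψ(x)). -/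
open Real Set Filter

private lemma cluster_aux (x : ℕ → ℝ) (R L : ℝ) (hx : ∀ n, x n ∈ Set.Icc 0 R)
    (hfreq : ∀ ε : ℝ, 0 < ε → ∃ᶠ n in atTop, |x (n+1) - L| < ε) :
    ∃ c ∈ Set.Icc 0 R, ∃ U : Ultrafilter ℕ, ↑U ≤ (atTop : Filter ℕ) ∧
      Tendsto x ↑U (nhds c) ∧ Tendsto (fun n => x (n+1)) ↑U (nhds L) := by
  set y : ℕ → ℝ := fun n => x (n+1) with hy
  have hG : NeBot ((atTop : Filter ℕ) ⊓ comap y (nhds L)) := by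
    rw [Filter.inf_neBot_iff_frequently_right]
    intro p hp
    rw [Filter.eventually_comap] at hp
    obtain ⟨t, ht, hpt⟩ := hp.exists_mem
    obtain ⟨ε, hε, hball⟩ := Metric.mem_nhds_iff.mp ht
    refine (hfreq ε hε).mono fun n hn => ?_
    exact hpt (y n) (hball (by simpa [Real.dist_eq] using hn)) n rfl
  haveI := hG
  obtain ⟨U, hU⟩ := Filter.exists_ultrafilter_le ((atTop : Filter ℕ) ⊓ comap y (nhds L))
  have hUat : ↑U ≤ (atTop : Filter ℕ) := hU.trans inf_le_left
  have hUy : Tendsto y ↑U (nhds L) := by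
    rw [Filter.tendsto_iff_comap]; exact hU.trans inf_le_right
  have hmem : ↑(U.map x) ≤ Filter.principal (Set.Icc 0 R) := by
    rw [Ultrafilter.coe_map, Filter.le_principal_iff, Filter.mem_map]
    exact Filter.univ_mem' hx
  obtain ⟨c, hc, hle⟩ := isCompact_Icc.ultrafilter_le_nhds (U.map x) hmem
  refine ⟨c, hc, U, hUat, ?_, hUy⟩
  rwa [Ultrafilter.coe_map] at hle

private lemma attract_at (x : ℕ → ℝ) (Q : ℝ → ℝ) (R v : ℝ) (hx : ∀ n, x n ∈ Set.Icc 0 R)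
    (hxrec : ∀ n : ℕ, x (n + 1) = Q (x n)) (hQcont : ContinuousOn Q (Set.Ici 0))
    (hfreq : ∀ ε : ℝ, 0 < ε → ∃ᶠ n in atTop, |x (n+1) - v| < ε) :
    ∃ c, 0 ≤ c ∧ liminf x atTop ≤ c ∧ c ≤ limsup x atTop ∧ Q c = v := by
  obtain ⟨c, hc, U, hUat, hUx, hUy⟩ := cluster_aux x R v hx hfreq
  have hbddA : IsBoundedUnder (· ≤ ·) (atTop : Filter ℕ) x :=
    isBoundedUnder_of ⟨R, fun n => (hx n).2⟩
  have hbddB : IsBoundedUnder (· ≥ ·) (atTop : Filter ℕ) x :=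
    isBoundedUnder_of ⟨0, fun n => (hx n).1⟩
  have hcl : liminf x atTop ≤ c := by
    apply le_of_forall_sub_le
    intro ε hε
    have h1 : ∀ᶠ n in (atTop : Filter ℕ), liminf x atTop - ε < x n :=
      eventually_lt_of_lt_liminf (by linarith) hbddB
    exact ge_of_tendsto hUx ((h1.filter_mono hUat).mono fun n hn => hn.le)
  have hcL : c ≤ limsup x atTop := by
    apply le_of_forall_sub_le
    intro ε hε
    have h1 : ∀ᶠ n in (atTop : Filter ℕ), x n < limsup x atTop + ε :=
      eventually_lt_of_limsup_lt (by linarith) hbddA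
    have := le_of_tendsto hUx ((h1.filter_mono hUat).mono fun n hn => hn.le)
    linarith
  have hc0 : 0 ≤ c := hc.1
  have hxU' : Tendsto x ↑U (nhdsWithin c (Set.Ici 0)) :=
    tendsto_nhdsWithin_iff.mpr ⟨hUx, Eventually.of_forall fun n => (hx n).1⟩
  have hQt : Tendsto (fun n => Q (x n)) ↑U (nhds (Q c)) :=
    ((hQcont c hc0).tendsto).comp hxU'
  have hQc : Q c = v := by
    refine tendsto_nhds_unique ?_ hUy
    simpa [← hxrec] using hQt
  exact ⟨c, hc0, hcl, hcL, hQc⟩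

/-- The interval [m*, M*] is a global attractor of the discrete-time system x_{n+1} = Q(x_n):
for every x₀ ≥ 0, m* ≤ liminf x_n ≤ limsup x_n ≤ M*. -/
theorem stmt14
    (a : ℝ) (ha : a < 0) (Φ F : ℝ → ℝ)
    (hΦc : ContinuousOn Φ (Set.Ici 0)) (hFc : ContinuousOn F (Set.Ici 0))
    (Φ₁ Φ₂ F₁ F₂ : ℝ) (hΦ₁ : 0 < Φ₁) (hF₁ : 0 < F₁)
    (hΦb : ∀ x : ℝ, 0 ≤ x → Φ₁ ≤ Φ x ∧ Φ x ≤ Φ₂)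
    (hFb : ∀ x : ℝ, 0 ≤ x → F₁ ≤ F x ∧ F x ≤ F₂)
    (Q : ℝ → ℝ) (hQ : ∀ x : ℝ, Q x = Real.exp (a * Φ x) * (x + F x))
    (hΦm : MonotoneOn Φ (Set.Ici 0)) (hFm : AntitoneOn F (Set.Ici 0))
    (Ψ : ℝ → ℝ)
    (hΨ : ∀ x : ℝ, Ψ x = F x * Real.exp (a * Φ x) / (1 - Real.exp (a * Φ x)))
    (m : ℕ → ℝ) (hm0 : m 0 = 0) (hmrec : ∀ n : ℕ, m (n + 1) = Ψ (Ψ (m n)))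
    (mstar Mstar : ℝ)
    (hms : Filter.Tendsto m Filter.atTop (nhds mstar))
    (hMs : Filter.Tendsto (fun n : ℕ => Ψ (m n)) Filter.atTop (nhds Mstar)) :
    ∀ x : ℕ → ℝ, 0 ≤ x 0 → (∀ n : ℕ, x (n + 1) = Q (x n)) →
      mstar ≤ Filter.liminf x Filter.atTop ∧
      Filter.liminf x Filter.atTop ≤ Filter.limsup x Filter.atTop ∧
      Filter.limsup x Filter.atTop ≤ Mstar := by
  -- basic facts about the exponential factor
  have hΦpos : ∀ z : ℝ, 0 ≤ z → 0 < Φ z := fun z hz => lt_of_lt_of_le hΦ₁ (hΦb z hz).1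
  have htpos : ∀ z : ℝ, 0 < Real.exp (a * Φ z) := fun z => Real.exp_pos _
  have ht1 : ∀ z : ℝ, 0 ≤ z → Real.exp (a * Φ z) < 1 := fun z hz =>
    Real.exp_lt_one_iff.mpr (mul_neg_of_neg_of_pos ha (hΦpos z hz))
  set e₁ : ℝ := Real.exp (a * Φ₁) with he₁def
  have he₁pos : 0 < e₁ := Real.exp_pos _
  have he₁lt : e₁ < 1 := Real.exp_lt_one_iff.mpr (mul_neg_of_neg_of_pos ha hΦ₁)
  have hte₁ : ∀ z : ℝ, 0 ≤ z → Real.exp (a * Φ z) ≤ e₁ := by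
    intro z hz
    apply Real.exp_le_exp.mpr
    nlinarith [(hΦb z hz).1]
  have hF₂pos : 0 < F₂ := lt_of_lt_of_le hF₁ (le_trans (hFb 0 le_rfl).1 (hFb 0 le_rfl).2)
  set B : ℝ := F₂ * e₁ / (1 - e₁) with hBdef
  have hBpos : 0 < B := div_pos (mul_pos hF₂pos he₁pos) (by linarith)
  -- Ψ is positive and bounded by B on [0, ∞)
  have hΨpos : ∀ z : ℝ, 0 ≤ z → 0 < Ψ z := by
    intro z hz
    rw [hΨ]
    exact div_pos (mul_pos (lt_of_lt_of_le hF₁ (hFb z hz).1) (htpos z))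
      (by linarith [ht1 z hz])
  have hΨub : ∀ z : ℝ, 0 ≤ z → Ψ z ≤ B := by
    intro z hz
    rw [hΨ, hBdef]
    set t := Real.exp (a * Φ z) with htdef
    have h1 : 0 < t := htpos z
    have h2 : t ≤ e₁ := hte₁ z hz
    have h3 : 0 < 1 - t := by linarith [ht1 z hz]
    have h4 : 0 < 1 - e₁ := by linarith
    rw [div_le_div_iff₀ h3 h4]
    have hFz := hFb z hz
    nlinarith [mul_le_mul hFz.2 h2 h1.le hF₂pos.le, mul_nonneg (mul_nonneg hF₂pos.le he₁pos.le) h1.le,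
      mul_nonneg (mul_nonneg (le_trans hF₁.le hFz.1) h1.le) (sub_nonneg.mpr h2)]
  -- Ψ is antitone on [0, ∞)
  have hΨanti : ∀ z w : ℝ, 0 ≤ z → z ≤ w → Ψ w ≤ Ψ z := by
    intro z w hz hzw
    have hw : (0:ℝ) ≤ w := le_trans hz hzw
    rw [hΨ, hΨ]
    set s := Real.exp (a * Φ z) with hsdef
    set t := Real.exp (a * Φ w) with htdef
    have hts : t ≤ s := Real.exp_le_exp.mpr (by
      have := hΦm hz hw hzw
      nlinarith)
    have h1 : 0 < t := htpos w
    have h2 : 0 < 1 - s := by linarith [ht1 z hz]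
    have h3 : 0 < 1 - t := by linarith [ht1 w hw]
    have hFzw : F w ≤ F z := hFm hz hw hzw
    have hFwpos : 0 < F w := lt_of_lt_of_le hF₁ (hFb w hw).1
    have hdiv : t / (1 - t) ≤ s / (1 - s) := by
      rw [div_le_div_iff₀ h3 h2]; nlinarith
    calc F w * t / (1 - t) = F w * (t / (1 - t)) := by ring
      _ ≤ F z * (s / (1 - s)) := by
          apply mul_le_mul hFzw hdiv (by positivity) (by linarith)
      _ = F z * s / (1 - s) := by ring
  -- the key identity : Q z is a convex combination of z and Ψ z
  have hkey : ∀ z : ℝ, 0 ≤ z → Q z = Ψ z + Real.exp (a * Φ z) * (z - Ψ z) := by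
    intro z hz
    rw [hQ, hΨ]
    have h3 : 1 - Real.exp (a * Φ z) ≠ 0 := by linarith [ht1 z hz]
    field_simp
    ring
  -- trajectory
  intro x hx0 hxrec
  have hxnn : ∀ n, 0 ≤ x n := by
    intro n
    induction n with
    | zero => exact hx0
    | succ k ih =>
      rw [hxrec, hQ]
      have := lt_of_lt_of_le hF₁ (hFb (x k) ih).1
      positivity
  set R : ℝ := max (x 0) B with hRdef
  have hxR : ∀ n, x n ≤ R := by
    intro n
    induction n with
    | zero => exact le_max_left _ _
    | succ k ih =>
      rw [hxrec]
      have hk := hkey (x k) (hxnn k)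
      have h1 := htpos (x k)
      have h2 := ht1 (x k) (hxnn k)
      rcases le_total (Ψ (x k)) (x k) with h | h
      · nlinarith
      · have : Ψ (x k) ≤ B := hΨub (x k) (hxnn k)
        have hBR : B ≤ R := le_max_right _ _
        nlinarith
  have hxmem : ∀ n, x n ∈ Set.Icc 0 R := fun n => ⟨hxnn n, hxR n⟩
  have hQcont : ContinuousOn Q (Set.Ici 0) := by
    have h1 : ContinuousOn (fun z : ℝ => Real.exp (a * Φ z) * (z + F z)) (Set.Ici 0) :=
      (Real.continuous_exp.comp_continuousOn (continuousOn_const.mul hΦc)).mul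
        (continuousOn_id.add hFc)
    exact h1.congr fun z _ => hQ z
  have hbddA : IsBoundedUnder (· ≤ ·) (atTop : Filter ℕ) x :=
    isBoundedUnder_of ⟨R, hxR⟩
  have hbddB : IsBoundedUnder (· ≥ ·) (atTop : Filter ℕ) x :=
    isBoundedUnder_of ⟨0, hxnn⟩
  set l : ℝ := liminf x atTop with hldef
  set L : ℝ := limsup x atTop with hLdef
  have hlL : l ≤ L := liminf_le_limsup hbddA hbddB
  have hl0 : 0 ≤ l := le_liminf_of_le hbddA.isCoboundedUnder_ge (Eventually.of_forall hxnn)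
  -- boundedness of the shifted sequence
  have hybddA : IsBoundedUnder (· ≤ ·) (atTop : Filter ℕ) (fun n => x (n+1)) :=
    isBoundedUnder_of ⟨R, fun n => hxR (n+1)⟩
  have hybddB : IsBoundedUnder (· ≥ ·) (atTop : Filter ℕ) (fun n => x (n+1)) :=
    isBoundedUnder_of ⟨0, fun n => hxnn (n+1)⟩
  -- Claim A : if μ ≤ liminf then limsup ≤ Ψ μ
  have claimA : ∀ μ : ℝ, 0 ≤ μ → μ ≤ l → L ≤ Ψ μ := by
    intro μ hμ0 hμl
    have hyls : limsup (fun n => x (n+1)) atTop = L := limsup_nat_add x 1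
    have hfreq : ∀ ε : ℝ, 0 < ε → ∃ᶠ n in atTop, |x (n+1) - L| < ε := by
      intro ε hε
      have h1 : ∃ᶠ n in (atTop : Filter ℕ), L - ε < x (n+1) :=
        frequently_lt_of_lt_limsup hybddB.isCoboundedUnder_le (by rw [hyls]; linarith)
      have h2 : ∀ᶠ n in (atTop : Filter ℕ), x (n+1) < L + ε :=
        eventually_lt_of_limsup_lt (by rw [hyls]; linarith) hybddA
      exact (h1.and_eventually h2).mono fun n hn => abs_lt.mpr ⟨by linarith [hn.1], by linarith [hn.2]⟩
    obtain ⟨c, hc0, hcl, hcL, hQc⟩ := attract_at x Q R L hxmem hxrec hQcont hfreq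
    have hid := hkey c hc0
    have h1 := htpos c
    have h2 := ht1 c hc0
    have hΨcμ : Ψ c ≤ Ψ μ := hΨanti μ c hμ0 (le_trans hμl hcl)
    by_contra hcon
    push_neg at hcon
    have hΨcL : Ψ c < L := lt_of_le_of_lt hΨcμ hcon
    have h5 : 0 < c - Ψ c := by nlinarith
    nlinarith [mul_pos (sub_pos.mpr h2) h5]
  -- Claim B : if limsup ≤ M then Ψ M ≤ liminf
  have claimB : ∀ M : ℝ, 0 ≤ M → L ≤ M → Ψ M ≤ l := by
    intro M hM0 hLM
    have hyls : liminf (fun n => x (n+1)) atTop = l := liminf_nat_add x 1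
    have hfreq : ∀ ε : ℝ, 0 < ε → ∃ᶠ n in atTop, |x (n+1) - l| < ε := by
      intro ε hε
      have h1 : ∃ᶠ n in (atTop : Filter ℕ), x (n+1) < l + ε :=
        frequently_lt_of_liminf_lt hybddA.isCoboundedUnder_ge (by rw [hyls]; linarith)
      have h2 : ∀ᶠ n in (atTop : Filter ℕ), l - ε < x (n+1) :=
        eventually_lt_of_lt_liminf (by rw [hyls]; linarith) hybddB
      exact (h1.and_eventually h2).mono fun n hn => abs_lt.mpr ⟨by linarith [hn.2], by linarith [hn.1]⟩
    obtain ⟨c, hc0, hcl, hcL, hQc⟩ := attract_at x Q R l hxmem hxrec hQcont hfreq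
    have hid := hkey c hc0
    have h1 := htpos c
    have h2 := ht1 c hc0
    have hΨMc : Ψ M ≤ Ψ c := hΨanti c M hc0 (le_trans hcL hLM)
    by_contra hcon
    push_neg at hcon
    have hlΨc : l < Ψ c := lt_of_lt_of_le hcon hΨMc
    have h5 : c - Ψ c < 0 := by nlinarith
    nlinarith [mul_pos (sub_pos.mpr h2) (neg_pos.mpr h5)]
  -- induction : m n ≤ l and L ≤ Ψ (m n) for all n
  have hmn : ∀ n : ℕ, 0 ≤ m n ∧ m n ≤ l := by
    intro n
    induction n with
    | zero => rw [hm0]; exact ⟨le_rfl, hl0⟩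
    | succ k ih =>
      have hA : L ≤ Ψ (m k) := claimA (m k) ih.1 ih.2
      have hΨmk : 0 ≤ Ψ (m k) := (hΨpos (m k) ih.1).le
      have hB : Ψ (Ψ (m k)) ≤ l := claimB (Ψ (m k)) hΨmk hA
      rw [hmrec]
      exact ⟨(hΨpos (Ψ (m k)) hΨmk).le, hB⟩
  have hml : mstar ≤ l := le_of_tendsto hms (Eventually.of_forall fun n => (hmn n).2)
  have hLM : L ≤ Mstar :=
    ge_of_tendsto hMs (Eventually.of_forall fun n => claimA (m n) (hmn n).1 (hmn n).2)
  exact ⟨hml, hlL, hLM⟩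
end

section
/- Suppose the minimal and maximal nonnegative solutions of x = Ψ(Ψ(x)) coincide, i.e. m* = M*. Then Q has a unique fixed point x* = m* = M* on [0,∞), and for every initial condition x₀ ≥ 0 the sequence defined by x_{n+1} = Q(x_n) converges to x*. -/
open Real Set Filter

set_option maxHeartbeats 1000000 in
/-- If m* = M*, then Q has the unique fixed point x* = m* = M* on [0,∞) and every orbit of
x_{n+1} = Q(x_n) starting from x₀ ≥ 0 converges to x*. -/
theorem stmt16
    (a : ℝ) (ha : a < 0) (Φ F : ℝ → ℝ)
    (hΦc : ContinuousOn Φ (Set.Ici 0)) (hFc : ContinuousOn F (Set.Ici 0))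
    (Φ₁ Φ₂ F₁ F₂ : ℝ) (hΦ₁ : 0 < Φ₁) (hF₁ : 0 < F₁)
    (hΦb : ∀ x : ℝ, 0 ≤ x → Φ₁ ≤ Φ x ∧ Φ x ≤ Φ₂)
    (hFb : ∀ x : ℝ, 0 ≤ x → F₁ ≤ F x ∧ F x ≤ F₂)
    (Q : ℝ → ℝ) (hQ : ∀ x : ℝ, Q x = Real.exp (a * Φ x) * (x + F x))
    (hΦm : MonotoneOn Φ (Set.Ici 0)) (hFm : AntitoneOn F (Set.Ici 0))
    (Ψ : ℝ → ℝ)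
    (hΨ : ∀ x : ℝ, Ψ x = F x * Real.exp (a * Φ x) / (1 - Real.exp (a * Φ x)))
    (mstar Mstar : ℝ)
    (hm : IsLeast {x : ℝ | 0 ≤ x ∧ Ψ (Ψ x) = x} mstar)
    (hM : IsGreatest {x : ℝ | 0 ≤ x ∧ Ψ (Ψ x) = x} Mstar)
    (heq : mstar = Mstar) :
    Q mstar = mstar ∧
    (∀ y : ℝ, 0 ≤ y → Q y = y → y = mstar) ∧
    (∀ x : ℕ → ℝ, 0 ≤ x 0 → (∀ n : ℕ, x (n + 1) = Q (x n)) →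
      Filter.Tendsto x Filter.atTop (nhds mstar)) := by
  have hΦ12 : Φ₁ ≤ Φ₂ := le_trans (hΦb 0 le_rfl).1 (hΦb 0 le_rfl).2
  set e2 : ℝ := Real.exp (a * Φ₁) with he2def
  set e1 : ℝ := Real.exp (a * Φ₂) with he1def
  have he2lt : e2 < 1 := Real.exp_lt_one_iff.mpr (mul_neg_of_neg_of_pos ha hΦ₁)
  have he1pos : 0 < e1 := Real.exp_pos _
  have he12 : e1 ≤ e2 := Real.exp_le_exp.mpr (by nlinarith)
  -- Facts about λ(t) = exp(a Φ t) for t ≥ 0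
  have hlam_pos : ∀ t : ℝ, 0 < Real.exp (a * Φ t) := fun t => Real.exp_pos _
  have hlam_le : ∀ t : ℝ, 0 ≤ t → Real.exp (a * Φ t) ≤ e2 := by
    intro t ht
    exact Real.exp_le_exp.mpr (mul_le_mul_of_nonpos_left (hΦb t ht).1 ha.le)
  have hlam_ge : ∀ t : ℝ, 0 ≤ t → e1 ≤ Real.exp (a * Φ t) := by
    intro t ht
    exact Real.exp_le_exp.mpr (mul_le_mul_of_nonpos_left (hΦb t ht).2 ha.le)
  have hlam_lt1 : ∀ t : ℝ, 0 ≤ t → Real.exp (a * Φ t) < 1 :=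
    fun t ht => lt_of_le_of_lt (hlam_le t ht) he2lt
  -- monotonicity of s ↦ s/(1-s)
  have hg : ∀ s t : ℝ, 0 < s → s ≤ t → t < 1 → s / (1 - s) ≤ t / (1 - t) := by
    intro s t hs hst ht
    rw [div_le_div_iff₀ (by linarith) (by linarith)]
    nlinarith
  have hΨmul : ∀ t : ℝ, Ψ t = F t * (Real.exp (a * Φ t) / (1 - Real.exp (a * Φ t))) := by
    intro t; rw [hΨ t, mul_div_assoc]
  set c1 : ℝ := F₁ * (e1 / (1 - e1)) with hc1def
  set c2 : ℝ := F₂ * (e2 / (1 - e2)) with hc2def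
  have hc1pos : 0 < c1 :=
    mul_pos hF₁ (div_pos he1pos (by linarith [lt_of_le_of_lt he12 he2lt]))
  have hΨlb : ∀ t : ℝ, 0 ≤ t → c1 ≤ Ψ t := by
    intro t ht
    rw [hΨmul t]
    refine mul_le_mul (hFb t ht).1 (hg _ _ he1pos (hlam_ge t ht) (hlam_lt1 t ht))
      (div_nonneg he1pos.le (by linarith [lt_of_le_of_lt he12 he2lt])) ?_
    linarith [(hFb t ht).1]
  have hΨub : ∀ t : ℝ, 0 ≤ t → Ψ t ≤ c2 := by
    intro t ht
    rw [hΨmul t]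
    refine mul_le_mul (hFb t ht).2 (hg _ _ (hlam_pos t) (hlam_le t ht) he2lt)
      (div_nonneg (hlam_pos t).le (by linarith [hlam_lt1 t ht])) ?_
    linarith [(hFb 0 le_rfl).1, (hFb 0 le_rfl).2]
  have hc12 : c1 ≤ c2 := le_trans (hΨlb 0 le_rfl) (hΨub 0 le_rfl)
  -- antitonicity of Ψ
  have hΨanti : ∀ u v : ℝ, 0 ≤ u → u ≤ v → Ψ v ≤ Ψ u := by
    intro u v hu huv
    have hv : (0:ℝ) ≤ v := hu.trans huv
    rw [hΨmul u, hΨmul v]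
    refine mul_le_mul (hFm hu hv huv)
      (hg _ _ (hlam_pos v)
        (Real.exp_le_exp.mpr (mul_le_mul_of_nonpos_left (hΦm hu hv huv) ha.le))
        (hlam_lt1 u hu))
      (div_nonneg (hlam_pos v).le (by linarith [hlam_lt1 v hv])) ?_
    linarith [(hFb u hu).1]
  -- continuity of Ψ
  have hexpc : ContinuousOn (fun t : ℝ => Real.exp (a * Φ t)) (Ici 0) :=
    Real.continuous_exp.comp_continuousOn (continuousOn_const.mul hΦc)
  have hden : ∀ t ∈ Ici (0:ℝ), 1 - Real.exp (a * Φ t) ≠ 0 := by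
    intro t ht
    have := hlam_lt1 t ht
    intro h; linarith [sub_eq_zero.mp h]
  have hΨc : ContinuousOn Ψ (Ici 0) := by
    have h1 : ContinuousOn (fun t : ℝ => F t * Real.exp (a * Φ t) / (1 - Real.exp (a * Φ t)))
        (Ici 0) := (hFc.mul hexpc).div (continuousOn_const.sub hexpc) hden
    exact h1.congr fun t _ => hΨ t
  -- Q as convex combination
  have hQ' : ∀ t : ℝ, 0 ≤ t →
      Q t = Real.exp (a * Φ t) * t + (1 - Real.exp (a * Φ t)) * Ψ t := by
    intro t ht
    have hne : 1 - Real.exp (a * Φ t) ≠ 0 := hden t ht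
    rw [hQ t, hΨ t]
    field_simp
  -- the solution set is {mstar}
  have hS : ∀ y : ℝ, 0 ≤ y → Ψ (Ψ y) = y → y = mstar := by
    intro y h1 h2
    exact le_antisymm (heq ▸ hM.2 ⟨h1, h2⟩) (hm.2 ⟨h1, h2⟩)
  have hm0 : (0:ℝ) ≤ mstar := hm.1.1
  have hmfix : Ψ (Ψ mstar) = mstar := hm.1.2
  have hΨm0 : (0:ℝ) ≤ Ψ mstar := le_trans hc1pos.le (hΨlb mstar hm0)
  have hΨmfix : Ψ mstar = mstar := hS (Ψ mstar) hΨm0 (congrArg Ψ hmfix)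
  have goal1 : Q mstar = mstar := by
    rw [hQ' mstar hm0, hΨmfix]; ring
  have goal2 : ∀ y : ℝ, 0 ≤ y → Q y = y → y = mstar := by
    intro y hy hQy
    have h1 : Real.exp (a * Φ y) * y + (1 - Real.exp (a * Φ y)) * Ψ y = y := by
      rw [← hQ' y hy]; exact hQy
    have hpos : (0:ℝ) < 1 - Real.exp (a * Φ y) := by linarith [hlam_lt1 y hy]
    have hΨy : Ψ y = y := by
      have h2 : (1 - Real.exp (a * Φ y)) * Ψ y = (1 - Real.exp (a * Φ y)) * y := by
        nlinarith
      exact mul_left_cancel₀ (ne_of_gt hpos) h2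
    exact hS y hy (by rw [hΨy, hΨy])
  -- continuity of ΨΨ and the auxiliary function g t = ΨΨ t - t
  have hΨΨc : ContinuousOn (fun t : ℝ => Ψ (Ψ t) - t) (Ici 0) := by
    refine ContinuousOn.sub (hΨc.comp hΨc ?_) continuousOn_id
    intro t ht
    exact le_trans hc1pos.le (hΨlb t ht)
  -- sign lemmas
  have sign_lt : ∀ t : ℝ, 0 ≤ t → t < mstar → t < Ψ (Ψ t) := by
    intro t ht htm
    by_contra hcon
    push_neg at hcon
    have h0 : (0:ℝ) < Ψ (Ψ 0) - 0 := by
      simpa using lt_of_lt_of_le hc1pos (hΨlb (Ψ 0) (le_trans hc1pos.le (hΨlb 0 le_rfl)))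
    have hsub : Icc (0:ℝ) t ⊆ Ici 0 := fun z hz => hz.1
    have hivt := intermediate_value_Icc' ht (hΨΨc.mono hsub)
    have h0mem : (0:ℝ) ∈ Icc (Ψ (Ψ t) - t) (Ψ (Ψ 0) - 0) := ⟨by linarith, by linarith⟩
    obtain ⟨z, hz, hzeq⟩ := hivt h0mem
    have hzfix : Ψ (Ψ z) = z := sub_eq_zero.mp hzeq
    have := hS z hz.1 hzfix
    rw [this] at hz
    linarith [hz.2]
  have sign_gt : ∀ t : ℝ, mstar < t → Ψ (Ψ t) < t := by
    intro t htm
    have ht : (0:ℝ) ≤ t := le_trans hm0 htm.le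
    by_contra hcon
    push_neg at hcon
    set T : ℝ := max t c2 + 1 with hTdef
    have htT : t ≤ T := le_trans (le_max_left _ _) (by linarith)
    have hT0 : (0:ℝ) ≤ T := le_trans ht htT
    have hTbig : c2 < T := lt_of_le_of_lt (le_max_right t c2) (by linarith)
    have hsub : Icc t T ⊆ Ici (0:ℝ) := fun z hz => le_trans ht hz.1
    have hivt := intermediate_value_Icc' htT (hΨΨc.mono hsub)
    have hΨT : Ψ (Ψ T) ≤ c2 := hΨub (Ψ T) (le_trans hc1pos.le (hΨlb T hT0))
    have h0mem : (0:ℝ) ∈ Icc (Ψ (Ψ T) - T) (Ψ (Ψ t) - t) := ⟨by linarith, by linarith⟩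
    obtain ⟨z, hz, hzeq⟩ := hivt h0mem
    have hzfix : Ψ (Ψ z) = z := sub_eq_zero.mp hzeq
    have := hS z (le_trans ht hz.1) hzfix
    rw [this] at hz
    linarith [hz.1]
  refine ⟨goal1, goal2, ?_⟩
  -- the orbit part
  intro x hx0 hrec
  have hpos : ∀ n : ℕ, 0 ≤ x n := by
    intro n
    induction n with
    | zero => exact hx0
    | succ k ih =>
      rw [hrec k, hQ (x k)]
      have hF := (hFb (x k) ih).1
      exact mul_nonneg (Real.exp_pos _).le (by linarith)
  have hstep : ∀ n : ℕ,
      x (n + 1) = Real.exp (a * Φ (x n)) * x n + (1 - Real.exp (a * Φ (x n))) * Ψ (x n) := by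
    intro n
    rw [hrec n]
    exact hQ' (x n) (hpos n)
  set M0 : ℝ := max (x 0) c2 with hM0def
  have hub : ∀ n : ℕ, x n ≤ M0 := by
    intro n
    induction n with
    | zero => exact le_max_left _ _
    | succ k ih =>
      rw [hstep k]
      have h1 : Ψ (x k) ≤ c2 := hΨub (x k) (hpos k)
      have h2 : c2 ≤ M0 := le_max_right _ _
      have h3 : 0 < Real.exp (a * Φ (x k)) := hlam_pos _
      have h4 : Real.exp (a * Φ (x k)) < 1 := hlam_lt1 _ (hpos k)
      nlinarith
  set c0 : ℝ := (1 - e2) * c1 with hc0def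
  have hc0pos : 0 < c0 := mul_pos (by linarith) hc1pos
  have hlb : ∀ n : ℕ, c0 ≤ x (n + 1) := by
    intro n
    rw [hstep n]
    have h1 : c1 ≤ Ψ (x n) := hΨlb (x n) (hpos n)
    have h2 : Real.exp (a * Φ (x n)) ≤ e2 := hlam_le _ (hpos n)
    have h3 : 0 < Real.exp (a * Φ (x n)) := hlam_pos _
    have h5 : (1 - e2) * c1 ≤ (1 - Real.exp (a * Φ (x n))) * Ψ (x n) :=
      mul_le_mul (by linarith) h1 hc1pos.le (by linarith [hlam_lt1 _ (hpos n)])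
    nlinarith [mul_nonneg h3.le (hpos n)]
  have hBa : Filter.IsBoundedUnder (· ≤ ·) Filter.atTop x :=
    ⟨M0, Filter.eventually_map.mpr (Filter.Eventually.of_forall hub)⟩
  have hBb : Filter.IsBoundedUnder (· ≥ ·) Filter.atTop x :=
    ⟨0, Filter.eventually_map.mpr (Filter.Eventually.of_forall hpos)⟩
  set L : ℝ := Filter.limsup x Filter.atTop with hLdef
  set l : ℝ := Filter.liminf x Filter.atTop with hldef
  have hlL : l ≤ L := Filter.liminf_le_limsup hBa hBb
  have hevc0 : ∀ᶠ n in Filter.atTop, c0 ≤ x n := by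
    refine Filter.eventually_atTop.mpr ⟨1, fun n hn => ?_⟩
    obtain ⟨k, rfl⟩ := Nat.exists_eq_add_of_le hn
    simpa [Nat.add_comm 1 k] using hlb k
  have hl_lb : c0 ≤ l := Filter.le_liminf_of_le hBa.isCoboundedUnder_ge hevc0
  have hl_pos : 0 < l := lt_of_lt_of_le hc0pos hl_lb
  have hL_pos : 0 < L := lt_of_lt_of_le hl_pos hlL
  -- key inequality 1 : L ≤ Ψ l
  have key1 : L ≤ Ψ l := by
    by_contra hcon
    push_neg at hcon
    set δ : ℝ := L - Ψ l with hδdef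
    have hδ : 0 < δ := by simp only [hδdef]; linarith
    have hcont : ContinuousWithinAt Ψ (Ici 0) l := hΨc l (mem_Ici.mpr hl_pos.le)
    have hev : {y : ℝ | Ψ y < Ψ l + δ / 2} ∈ nhdsWithin l (Ici 0) :=
      hcont (Iio_mem_nhds (by linarith))
    obtain ⟨ε₀, hε₀, hball⟩ := Metric.mem_nhdsWithin_iff.mp hev
    set ε : ℝ := min (min (ε₀ / 2) (l / 2)) ((1 - e2) * δ / (4 * (e2 + 1))) with hεdef
    have hεpos : 0 < ε := by
      refine lt_min (lt_min (by linarith) (by linarith)) ?_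
      have h1 : (0:ℝ) < e2 := lt_of_lt_of_le he1pos he12
      exact div_pos (mul_pos (by linarith) hδ) (by positivity)
    have hεε₀ : ε < ε₀ := lt_of_le_of_lt (le_trans (min_le_left _ _) (min_le_left _ _))
      (by linarith)
    have hεl : ε ≤ l / 2 := le_trans (min_le_left _ _) (min_le_right _ _)
    have hεδ : e2 * ε ≤ (1 - e2) * δ / 4 := by
      have h1 : (0:ℝ) < e2 := lt_of_lt_of_le he1pos he12
      have h2 : ε ≤ (1 - e2) * δ / (4 * (e2 + 1)) := min_le_right _ _
      have h3 : e2 * ε ≤ (e2 + 1) * ((1 - e2) * δ / (4 * (e2 + 1))) := by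
        refine mul_le_mul (by linarith) h2 hεpos.le (by linarith)
      calc e2 * ε ≤ (e2 + 1) * ((1 - e2) * δ / (4 * (e2 + 1))) := h3
        _ = (1 - e2) * δ / 4 := by field_simp
    have hlε0 : (0:ℝ) < l - ε := by linarith
    set B : ℝ := Ψ (l - ε) with hBdef
    have hB : B < Ψ l + δ / 2 := by
      apply hball
      constructor
      · rw [Metric.mem_ball, Real.dist_eq]
        rw [abs_of_nonpos (by linarith)]
        linarith
      · exact mem_Ici.mpr hlε0.le
    have hev1 : ∀ᶠ n in Filter.atTop, x n < L + ε :=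
      Filter.eventually_lt_of_limsup_lt (by simp only [← hLdef]; linarith) hBa
    have hev2 : ∀ᶠ n in Filter.atTop, l - ε < x n :=
      Filter.eventually_lt_of_lt_liminf (by simp only [← hldef]; linarith) hBb
    set K : ℝ := max B (e2 * (L + ε) + (1 - e2) * B) with hKdef
    have hevK : ∀ᶠ n in Filter.atTop, x (n + 1) ≤ K := by
      filter_upwards [hev1, hev2] with n h1 h2
      rw [hstep n]
      set lam : ℝ := Real.exp (a * Φ (x n)) with hlamdef
      have hl1 : 0 < lam := hlam_pos _
      have hl2 : lam ≤ e2 := hlam_le _ (hpos n)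
      have hΨn : Ψ (x n) ≤ B := hΨanti (l - ε) (x n) hlε0.le h2.le
      rcases le_total (L + ε) B with hc | hc
      · refine le_trans ?_ (le_max_left B _)
        nlinarith
      · refine le_trans ?_ (le_max_right B _)
        nlinarith
    have hKL : K < L := by
      rw [hKdef]
      apply max_lt
      · simp only [hδdef] at hB ⊢; linarith
      · have h3 : (1 - e2) * B < (1 - e2) * (Ψ l + δ / 2) :=
          mul_lt_mul_of_pos_left hB (by linarith)
        simp only [hδdef] at h3 hεδ ⊢
        nlinarith
    have hevK' : ∀ᶠ n in Filter.atTop, x n ≤ K := by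
      obtain ⟨N, hN⟩ := Filter.eventually_atTop.mp hevK
      refine Filter.eventually_atTop.mpr ⟨N + 1, fun n hn => ?_⟩
      obtain ⟨k, rfl⟩ := Nat.exists_eq_add_of_le hn
      have h := hN (N + k) (Nat.le_add_right N k)
      have he : N + 1 + k = (N + k) + 1 := by omega
      rw [he]
      exact h
    have : L ≤ K := Filter.limsup_le_of_le hBb.isCoboundedUnder_le hevK'
    linarith
  -- key inequality 2 : Ψ L ≤ l
  have key2 : Ψ L ≤ l := by
    by_contra hcon
    push_neg at hcon
    set δ : ℝ := Ψ L - l with hδdef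
    have hδ : 0 < δ := by simp only [hδdef]; linarith
    have hcont : ContinuousWithinAt Ψ (Ici 0) L := hΨc L (mem_Ici.mpr hL_pos.le)
    have hev : {y : ℝ | Ψ L - δ / 2 < Ψ y} ∈ nhdsWithin L (Ici 0) :=
      hcont (Ioi_mem_nhds (by linarith))
    obtain ⟨ε₀, hε₀, hball⟩ := Metric.mem_nhdsWithin_iff.mp hev
    set ε : ℝ := min (ε₀ / 2) ((1 - e2) * δ / (4 * (e2 + 1))) with hεdef
    have hεpos : 0 < ε := by
      refine lt_min (by linarith) ?_
      have h1 : (0:ℝ) < e2 := lt_of_lt_of_le he1pos he12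
      exact div_pos (mul_pos (by linarith) hδ) (by positivity)
    have hεε₀ : ε < ε₀ := lt_of_le_of_lt (min_le_left _ _) (by linarith)
    have hεδ : e2 * ε ≤ (1 - e2) * δ / 4 := by
      have h1 : (0:ℝ) < e2 := lt_of_lt_of_le he1pos he12
      have h2 : ε ≤ (1 - e2) * δ / (4 * (e2 + 1)) := min_le_right _ _
      have h3 : e2 * ε ≤ (e2 + 1) * ((1 - e2) * δ / (4 * (e2 + 1))) := by
        refine mul_le_mul (by linarith) h2 hεpos.le (by linarith)
      calc e2 * ε ≤ (e2 + 1) * ((1 - e2) * δ / (4 * (e2 + 1))) := h3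
        _ = (1 - e2) * δ / 4 := by field_simp
    set B : ℝ := Ψ (L + ε) with hBdef
    have hB : Ψ L - δ / 2 < B := by
      apply hball
      constructor
      · rw [Metric.mem_ball, Real.dist_eq]
        rw [abs_of_nonneg (by linarith)]
        linarith
      · exact mem_Ici.mpr (by linarith)
    have hev1 : ∀ᶠ n in Filter.atTop, x n < L + ε :=
      Filter.eventually_lt_of_limsup_lt (by simp only [← hLdef]; linarith) hBa
    set K : ℝ := min B (e2 * (l - ε) + (1 - e2) * B) with hKdef
    have hevK : ∀ᶠ n in Filter.atTop, K ≤ x (n + 1) := by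
      have hev2 : ∀ᶠ n in Filter.atTop, l - ε < x n :=
        Filter.eventually_lt_of_lt_liminf (by simp only [← hldef]; linarith) hBb
      filter_upwards [hev1, hev2] with n h1 h2
      rw [hstep n]
      set lam : ℝ := Real.exp (a * Φ (x n)) with hlamdef
      have hl1 : 0 < lam := hlam_pos _
      have hl2 : lam ≤ e2 := hlam_le _ (hpos n)
      have hΨn : B ≤ Ψ (x n) := hΨanti (x n) (L + ε) (hpos n) h1.le
      rcases le_total B (l - ε) with hc | hc
      · refine le_trans (min_le_left B _) ?_
        nlinarith
      · refine le_trans (min_le_right B _) ?_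
        nlinarith
    have hlK : l < K := by
      rw [hKdef]
      apply lt_min
      · simp only [hδdef] at hB ⊢; linarith
      · have h3 : (1 - e2) * (Ψ L - δ / 2) < (1 - e2) * B :=
          mul_lt_mul_of_pos_left hB (by linarith)
        simp only [hδdef] at h3 hεδ ⊢
        nlinarith
    have hevK' : ∀ᶠ n in Filter.atTop, K ≤ x n := by
      obtain ⟨N, hN⟩ := Filter.eventually_atTop.mp hevK
      refine Filter.eventually_atTop.mpr ⟨N + 1, fun n hn => ?_⟩
      obtain ⟨k, rfl⟩ := Nat.exists_eq_add_of_le hn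
      have h := hN (N + k) (Nat.le_add_right N k)
      have he : N + 1 + k = (N + k) + 1 := by omega
      rw [he]
      exact h
    have : K ≤ l := Filter.le_liminf_of_le hBa.isCoboundedUnder_ge hevK'
    linarith
  -- conclude l = L = mstar
  have hΨL0 : (0:ℝ) ≤ Ψ L := le_trans hc1pos.le (hΨlb L hL_pos.le)
  have hΨΨl : Ψ (Ψ l) ≤ l := le_trans (hΨanti L (Ψ l) hL_pos.le key1) key2
  have hΨΨL : L ≤ Ψ (Ψ L) := le_trans key1 (hΨanti (Ψ L) l hΨL0 key2)
  have hml : mstar ≤ l := by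
    by_contra hcon
    push_neg at hcon
    exact absurd hΨΨl (not_le.mpr (sign_lt l hl_pos.le hcon))
  have hLm : L ≤ mstar := by
    by_contra hcon
    push_neg at hcon
    exact absurd hΨΨL (not_le.mpr (sign_gt L hcon))
  have hleq : l = mstar := le_antisymm (le_trans hlL hLm) hml
  have hLeq : L = mstar := le_antisymm hLm (le_trans hml hlL)
  exact tendsto_of_liminf_eq_limsup hleq hLeq hBa hBb
end

section
/- Let x ≥ 0 be a point at which both Φ and F are differentiable, with Φ′(x) ≥ 0 and F′(x) ≤ 0. Then Q is differentiable at x with Q′(x) = a·Φ′(x)·Q(x) + exp(a·Φ(x))·(1 + F′(x)), and this derivative satisfies Q′(x) ≤ exp(a·Φ₁) < 1. -/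
open Real

theorem hasDerivAt_exp_mul_mul_id_add {a Φ' F' x : ℝ} {Φ F : ℝ → ℝ}
    (hΦ : HasDerivAt Φ Φ' x) (hF : HasDerivAt F F' x) :
    HasDerivAt (fun y => exp (a * Φ y) * (y + F y))
      (a * Φ' * (exp (a * Φ x) * (x + F x)) + exp (a * Φ x) * (1 + F')) x := by
  have hexp : HasDerivAt (fun y => exp (a * Φ y)) (exp (a * Φ x) * (a * Φ')) x :=
    (hΦ.const_mul a).exp
  have hshift : HasDerivAt (fun y => y + F y) (1 + F') x := (hasDerivAt_id' x).add hF
  exact (hexp.mul hshift).congr_deriv (by ring)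

theorem mul_add_exp_mul_le_exp_mul {a Φ₁ φ Φ' F' q : ℝ} (ha : a ≤ 0) (hφ : Φ₁ ≤ φ)
    (hΦ' : 0 ≤ Φ') (hF' : F' ≤ 0) (hq : 0 ≤ q) :
    a * Φ' * q + exp (a * φ) * (1 + F') ≤ exp (a * Φ₁) := by
  have hdrift : a * Φ' * q ≤ 0 :=
    mul_nonpos_of_nonpos_of_nonneg (mul_nonpos_of_nonpos_of_nonneg ha hΦ') hq
  have hjump : exp (a * φ) * (1 + F') ≤ exp (a * Φ₁) :=
    calc exp (a * φ) * (1 + F') ≤ exp (a * φ) :=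
          mul_le_of_le_one_right (exp_nonneg _) (by linarith)
      _ ≤ exp (a * Φ₁) := exp_le_exp.mpr (mul_le_mul_of_nonpos_left hφ ha)
  linarith

theorem stmt17_general
    (a : ℝ) (ha : a < 0) (Φ F : ℝ → ℝ)
    (Φ₁ Φ₂ F₁ F₂ : ℝ) (hΦ₁ : 0 < Φ₁) (hF₁ : 0 < F₁)
    (hΦb : ∀ x : ℝ, 0 ≤ x → Φ₁ ≤ Φ x ∧ Φ x ≤ Φ₂)
    (hFb : ∀ x : ℝ, 0 ≤ x → F₁ ≤ F x ∧ F x ≤ F₂)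
    (Q : ℝ → ℝ) (hQ : ∀ x : ℝ, Q x = Real.exp (a * Φ x) * (x + F x))
    (x Φ' F' : ℝ) (hx : 0 ≤ x)
    (hΦd : HasDerivAt Φ Φ' x) (hFd : HasDerivAt F F' x)
    (hΦ'nn : 0 ≤ Φ') (hF'np : F' ≤ 0) :
    HasDerivAt Q (a * Φ' * Q x + Real.exp (a * Φ x) * (1 + F')) x ∧
    a * Φ' * Q x + Real.exp (a * Φ x) * (1 + F') ≤ Real.exp (a * Φ₁) ∧
    Real.exp (a * Φ₁) < 1 := by
  have hQ_eq : Q = fun y => exp (a * Φ y) * (y + F y) := funext hQ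
  have hQ_nonneg : 0 ≤ Q x := by
    rw [hQ x]
    have hFx := (hFb x hx).1
    exact mul_nonneg (exp_nonneg _) (by linarith)
  refine ⟨?_, mul_add_exp_mul_le_exp_mul ha.le (hΦb x hx).1 hΦ'nn hF'np hQ_nonneg,
    exp_lt_one_iff.mpr (mul_neg_of_neg_of_pos ha hΦ₁)⟩
  rw [hQ x, hQ_eq]
  exact hasDerivAt_exp_mul_mul_id_add hΦd hFd

/-- At a point of differentiability with Φ′(x) ≥ 0 and F′(x) ≤ 0, the return map Q is
differentiable with Q′(x) = aΦ′(x)Q(x) + exp(aΦ(x))(1 + F′(x)) ≤ exp(aΦ₁) < 1. -/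
theorem stmt17
    (a : ℝ) (ha : a < 0) (Φ F : ℝ → ℝ)
    (hΦc : ContinuousOn Φ (Set.Ici 0)) (hFc : ContinuousOn F (Set.Ici 0))
    (Φ₁ Φ₂ F₁ F₂ : ℝ) (hΦ₁ : 0 < Φ₁) (hF₁ : 0 < F₁)
    (hΦb : ∀ x : ℝ, 0 ≤ x → Φ₁ ≤ Φ x ∧ Φ x ≤ Φ₂)
    (hFb : ∀ x : ℝ, 0 ≤ x → F₁ ≤ F x ∧ F x ≤ F₂)
    (Q : ℝ → ℝ) (hQ : ∀ x : ℝ, Q x = Real.exp (a * Φ x) * (x + F x))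
    (x Φ' F' : ℝ) (hx : 0 ≤ x)
    (hΦd : HasDerivAt Φ Φ' x) (hFd : HasDerivAt F F' x)
    (hΦ'nn : 0 ≤ Φ') (hF'np : F' ≤ 0) :
    HasDerivAt Q (a * Φ' * Q x + Real.exp (a * Φ x) * (1 + F')) x ∧
    a * Φ' * Q x + Real.exp (a * Φ x) * (1 + F') ≤ Real.exp (a * Φ₁) ∧
    Real.exp (a * Φ₁) < 1 :=
  stmt17_general a ha Φ F Φ₁ Φ₂ F₁ F₂ hΦ₁ hF₁ hΦb hFb Q hQ x Φ' F' hx hΦd hFd hΦ'nn hF'np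
end

section
/- Assume Φ and F are locally Lipschitz on [0,∞), Φ is nondecreasing, and F is nonincreasing. Then for all x₂ > x₁ ≥ 0 one has Q(x₂) − Q(x₁) ≤ exp(a·Φ₁)·(x₂ − x₁) < x₂ − x₁; in particular the function x ↦ x − Q(x) is strictly increasing on [0,∞), and Q has at most one fixed point on [0,∞). -/
open Real Set Filter

/-- Under negative feedback (Φ nondecreasing, F nonincreasing, both locally Lipschitz),
Q(x₂) − Q(x₁) ≤ exp(aΦ₁)(x₂ − x₁) < x₂ − x₁; hence x ↦ x − Q(x) is strictly increasing
on [0,∞) and Q has at most one fixed point there. -/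
theorem stmt18
    (a : ℝ) (ha : a < 0) (Φ F : ℝ → ℝ)
    (hΦc : ContinuousOn Φ (Set.Ici 0)) (hFc : ContinuousOn F (Set.Ici 0))
    (Φ₁ Φ₂ F₁ F₂ : ℝ) (hΦ₁ : 0 < Φ₁) (hF₁ : 0 < F₁)
    (hΦb : ∀ x : ℝ, 0 ≤ x → Φ₁ ≤ Φ x ∧ Φ x ≤ Φ₂)
    (hFb : ∀ x : ℝ, 0 ≤ x → F₁ ≤ F x ∧ F x ≤ F₂)
    (Q : ℝ → ℝ) (hQ : ∀ x : ℝ, Q x = Real.exp (a * Φ x) * (x + F x))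
    (hΦlip : LocallyLipschitzOn (Set.Ici 0) Φ) (hFlip : LocallyLipschitzOn (Set.Ici 0) F)
    (hΦm : MonotoneOn Φ (Set.Ici 0)) (hFm : AntitoneOn F (Set.Ici 0)) :
    (∀ x₁ x₂ : ℝ, 0 ≤ x₁ → x₁ < x₂ →
      Q x₂ - Q x₁ ≤ Real.exp (a * Φ₁) * (x₂ - x₁) ∧ Q x₂ - Q x₁ < x₂ - x₁) ∧
    StrictMonoOn (fun x : ℝ => x - Q x) (Set.Ici 0) ∧
    (∀ y z : ℝ, 0 ≤ y → 0 ≤ z → Q y = y → Q z = z → y = z) := by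
  have key : ∀ x₁ x₂ : ℝ, 0 ≤ x₁ → x₁ < x₂ →
      Q x₂ - Q x₁ ≤ Real.exp (a * Φ₁) * (x₂ - x₁) ∧ Q x₂ - Q x₁ < x₂ - x₁ := by
    intro x₁ x₂ h1 h12
    have h2 : (0:ℝ) ≤ x₂ := le_of_lt (lt_of_le_of_lt h1 h12)
    have hF2 : F₁ ≤ F x₂ := (hFb x₂ h2).1
    have hx2F : 0 ≤ x₂ + F x₂ := by linarith
    have hΦle : Φ x₁ ≤ Φ x₂ := hΦm h1 h2 (le_of_lt h12)
    have hFle : F x₂ ≤ F x₁ := hFm h1 h2 (le_of_lt h12)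
    have hexp : Real.exp (a * Φ x₂) ≤ Real.exp (a * Φ x₁) :=
      Real.exp_le_exp.2 (by nlinarith)
    have hexp1 : Real.exp (a * Φ x₁) ≤ Real.exp (a * Φ₁) :=
      Real.exp_le_exp.2 (by nlinarith [(hΦb x₁ h1).1])
    have step1 : Q x₂ - Q x₁ ≤ Real.exp (a * Φ x₁) * ((x₂ + F x₂) - (x₁ + F x₁)) := by
      rw [hQ x₁, hQ x₂]
      have := mul_le_mul_of_nonneg_right hexp hx2F
      nlinarith
    have step2 : Q x₂ - Q x₁ ≤ Real.exp (a * Φ x₁) * (x₂ - x₁) := by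
      have : Real.exp (a * Φ x₁) * ((x₂ + F x₂) - (x₁ + F x₁)) ≤
          Real.exp (a * Φ x₁) * (x₂ - x₁) := by
        apply mul_le_mul_of_nonneg_left _ (Real.exp_pos _).le
        linarith
      linarith
    have step3 : Q x₂ - Q x₁ ≤ Real.exp (a * Φ₁) * (x₂ - x₁) := by
      have := mul_le_mul_of_nonneg_right hexp1 (by linarith : (0:ℝ) ≤ x₂ - x₁)
      linarith
    refine ⟨step3, lt_of_le_of_lt step3 ?_⟩
    have hlt1 : Real.exp (a * Φ₁) < 1 := by
      rw [Real.exp_lt_one_iff]; nlinarith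
    nlinarith
  refine ⟨key, ?_, ?_⟩
  · intro x₁ h1 x₂ h2 h12
    have := (key x₁ x₂ h1 h12).2
    simp only
    linarith
  · intro y z hy hz hQy hQz
    by_contra hne
    rcases lt_or_gt_of_ne hne with h | h
    · have := (key y z hy h).2; rw [hQy, hQz] at this; linarith
    · have := (key z y hz h).2; rw [hQy, hQz] at this; linarith
end

section
/- For every initial condition x₀ ≥ 0, the sequence defined by x_{n+1} = Q(x_n) satisfies the ultimate bounds liminf_{n→∞} x_n ≥ F₁/(exp(−a·Φ₂) − 1) and limsup_{n→∞} (x_n + F(x_n)) ≤ F₂/(1 − exp(a·Φ₁)); that is, the pre-impulse states are ultimately bounded below by F₁/(exp(−a·Φ₂) − 1) and the post-impulse states ultimately bounded above by F₂/(1 − exp(a·Φ₁)). -/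
open Real Set Filter

/-!
Both bounds come from comparing with an affine recursion `u (n+1) = c * u n + d`, `0 ≤ c < 1`,
whose orbits converge geometrically to the fixed point `d / (1 - c)`. As `a < 0`, the factor
`exp (a * Φ x)` lies between `exp (a * Φ₂)` and `exp (a * Φ₁) < 1`, so the post-impulse states
`y n = x n + F (x n)` satisfy `y (n+1) ≤ exp (a * Φ₁) * y n + F₂` and the pre-impulse states satisfy
`x (n+1) ≥ exp (a * Φ₂) * x n + exp (a * Φ₂) * F₁`. The fixed point of the latter is
`exp (a * Φ₂) * F₁ / (1 - exp (a * Φ₂)) = F₁ / (exp (-a * Φ₂) - 1)`.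
-/

section AffineComparison

variable {u : ℕ → ℝ} {c d : ℝ}

theorem sub_le_pow_mul_of_le_mul_add (hc : 0 ≤ c) (hc1 : c ≠ 1)
    (h : ∀ n, u (n + 1) ≤ c * u n + d) (n : ℕ) :
    u n - d / (1 - c) ≤ c ^ n * (u 0 - d / (1 - c)) := by
  have hfix : c * (d / (1 - c)) + d = d / (1 - c) := by
    field_simp [sub_ne_zero.mpr hc1.symm]
    ring
  induction n with
  | zero => simp
  | succ n ih =>
    calc u (n + 1) - d / (1 - c) ≤ c * (u n - d / (1 - c)) := by linarith [h n]
      _ ≤ c * (c ^ n * (u 0 - d / (1 - c))) := mul_le_mul_of_nonneg_left ih hc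
      _ = c ^ (n + 1) * (u 0 - d / (1 - c)) := by ring

theorem pow_mul_le_sub_of_mul_add_le (hc : 0 ≤ c) (hc1 : c ≠ 1)
    (h : ∀ n, c * u n + d ≤ u (n + 1)) (n : ℕ) :
    c ^ n * (u 0 - d / (1 - c)) ≤ u n - d / (1 - c) := by
  have := sub_le_pow_mul_of_le_mul_add (u := -u) (d := -d) hc hc1
    (fun n => by simp only [Pi.neg_apply]; linarith [h n]) n
  simp only [Pi.neg_apply, neg_div] at this
  linarith

theorem le_max_of_le_mul_add (hc : 0 ≤ c) (hc1 : c < 1)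
    (h : ∀ n, u (n + 1) ≤ c * u n + d) (n : ℕ) :
    u n ≤ max (u 0) (d / (1 - c)) := by
  induction n with
  | zero => exact le_max_left _ _
  | succ n ih =>
    set M := max (u 0) (d / (1 - c))
    have hM : d ≤ (1 - c) * M := by
      rw [← div_le_iff₀' (by linarith)]
      exact le_max_right _ _
    nlinarith [h n, mul_le_mul_of_nonneg_left ih hc]

theorem limsup_le_div_one_sub_of_le_mul_add (hc : 0 ≤ c) (hc1 : c < 1)
    (hu : IsCoboundedUnder (· ≤ ·) atTop u) (h : ∀ n, u (n + 1) ≤ c * u n + d) :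
    limsup u atTop ≤ d / (1 - c) := by
  set U := d / (1 - c)
  have hlim : Tendsto (fun n => U + c ^ n * (u 0 - U)) atTop (nhds U) := by
    simpa using tendsto_const_nhds.add
      ((tendsto_pow_atTop_nhds_zero_of_lt_one hc hc1).mul_const (u 0 - U))
  calc limsup u atTop ≤ limsup (fun n => U + c ^ n * (u 0 - U)) atTop :=
        limsup_le_limsup (Eventually.of_forall fun n => by
          linarith [sub_le_pow_mul_of_le_mul_add hc hc1.ne h n]) hu hlim.isBoundedUnder_le
    _ = U := hlim.limsup_eq

theorem div_one_sub_le_liminf_of_mul_add_le (hc : 0 ≤ c) (hc1 : c < 1)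
    (hu : IsCoboundedUnder (· ≥ ·) atTop u) (h : ∀ n, c * u n + d ≤ u (n + 1)) :
    d / (1 - c) ≤ liminf u atTop := by
  set U := d / (1 - c)
  have hlim : Tendsto (fun n => U + c ^ n * (u 0 - U)) atTop (nhds U) := by
    simpa using tendsto_const_nhds.add
      ((tendsto_pow_atTop_nhds_zero_of_lt_one hc hc1).mul_const (u 0 - U))
  calc U = liminf (fun n => U + c ^ n * (u 0 - U)) atTop := hlim.liminf_eq.symm
    _ ≤ liminf u atTop :=
        liminf_le_liminf (Eventually.of_forall fun n => by
          linarith [pow_mul_le_sub_of_mul_add_le hc hc1.ne h n]) hlim.isBoundedUnder_ge hu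

end AffineComparison

theorem exp_mul_le_exp_mul {a s t : ℝ} (ha : a ≤ 0) (h : s ≤ t) : exp (a * t) ≤ exp (a * s) :=
  exp_le_exp.mpr (mul_le_mul_of_nonpos_left h ha)

theorem div_exp_neg_sub_one (t b : ℝ) : b / (exp (-t) - 1) = exp t * b / (1 - exp t) := by
  rw [exp_neg, show (exp t)⁻¹ - 1 = (1 - exp t) / exp t by field_simp, div_div_eq_mul_div,
    mul_comm]

theorem stmt19_general
    (a : ℝ) (ha : a < 0) (Φ F : ℝ → ℝ)
    (Φ₁ Φ₂ F₁ F₂ : ℝ) (hΦ₁ : 0 < Φ₁) (hF₁ : 0 < F₁)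
    (hΦb : ∀ x : ℝ, 0 ≤ x → Φ₁ ≤ Φ x ∧ Φ x ≤ Φ₂)
    (hFb : ∀ x : ℝ, 0 ≤ x → F₁ ≤ F x ∧ F x ≤ F₂)
    (Q : ℝ → ℝ) (hQ : ∀ x : ℝ, Q x = Real.exp (a * Φ x) * (x + F x)) :
    ∀ x : ℕ → ℝ, 0 ≤ x 0 → (∀ n : ℕ, x (n + 1) = Q (x n)) →
      F₁ / (Real.exp (-a * Φ₂) - 1) ≤ Filter.liminf x Filter.atTop ∧
      Filter.limsup (fun n : ℕ => x n + F (x n)) Filter.atTop ≤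
        F₂ / (1 - Real.exp (a * Φ₁)) := by
  intro x hx0 hrec
  set α := exp (a * Φ₁)
  set β := exp (a * Φ₂)
  set y := fun n => x n + F (x n)
  have hα1 : α < 1 := exp_lt_one_iff.mpr (mul_neg_of_neg_of_pos ha hΦ₁)
  have hβ1 : β < 1 := exp_lt_one_iff.mpr
    (mul_neg_of_neg_of_pos ha (hΦ₁.trans_le ((hΦb 0 le_rfl).1.trans (hΦb 0 le_rfl).2)))
  have hx : ∀ n, 0 ≤ x n := by
    intro n
    induction n with
    | zero => exact hx0
    | succ n ih =>
      rw [hrec, hQ]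
      exact mul_nonneg (exp_pos _).le (by linarith [(hFb _ ih).1])
  have hxy : ∀ n, x n ≤ y n := fun n => by linarith [(hFb _ (hx n)).1]
  have hpost : ∀ n, y (n + 1) ≤ α * y n + F₂ := fun n => by
    have : x (n + 1) ≤ α * y n := by
      rw [hrec, hQ]
      exact mul_le_mul_of_nonneg_right (exp_mul_le_exp_mul ha.le (hΦb _ (hx n)).1)
        ((hx n).trans (hxy n))
    linarith [(hFb _ (hx (n + 1))).2]
  have hpre : ∀ n, β * x n + β * F₁ ≤ x (n + 1) := fun n => by
    rw [hrec, hQ, ← mul_add]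
    exact mul_le_mul (exp_mul_le_exp_mul ha.le (hΦb _ (hx n)).2)
      (by linarith [(hFb _ (hx n)).1]) (by linarith [hx n]) (exp_pos _).le
  have hx_bdd : ∀ n, x n ≤ max (y 0) (F₂ / (1 - α)) := fun n =>
    (hxy n).trans (le_max_of_le_mul_add (exp_pos _).le hα1 hpost n)
  constructor
  · rw [neg_mul, div_exp_neg_sub_one]
    exact div_one_sub_le_liminf_of_mul_add_le (exp_pos _).le hβ1
      (isCoboundedUnder_ge_of_le atTop hx_bdd) hpre
  · exact limsup_le_div_one_sub_of_le_mul_add (exp_pos _).le hα1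
      (isCoboundedUnder_le_of_le atTop fun n => (hx n).trans (hxy n)) hpost

/-- Ultimate bounds on the orbits of the return map: the pre-impulse states are ultimately
bounded below by F₁/(exp(−aΦ₂) − 1) and the post-impulse states ultimately bounded above
by F₂/(1 − exp(aΦ₁)). -/
theorem stmt19
    (a : ℝ) (ha : a < 0) (Φ F : ℝ → ℝ)
    (hΦc : ContinuousOn Φ (Set.Ici 0)) (hFc : ContinuousOn F (Set.Ici 0))
    (Φ₁ Φ₂ F₁ F₂ : ℝ) (hΦ₁ : 0 < Φ₁) (hF₁ : 0 < F₁)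
    (hΦb : ∀ x : ℝ, 0 ≤ x → Φ₁ ≤ Φ x ∧ Φ x ≤ Φ₂)
    (hFb : ∀ x : ℝ, 0 ≤ x → F₁ ≤ F x ∧ F x ≤ F₂)
    (Q : ℝ → ℝ) (hQ : ∀ x : ℝ, Q x = Real.exp (a * Φ x) * (x + F x)) :
    ∀ x : ℕ → ℝ, 0 ≤ x 0 → (∀ n : ℕ, x (n + 1) = Q (x n)) →
      F₁ / (Real.exp (-a * Φ₂) - 1) ≤ Filter.liminf x Filter.atTop ∧
      Filter.limsup (fun n : ℕ => x n + F (x n)) Filter.atTop ≤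
        F₂ / (1 - Real.exp (a * Φ₁)) :=
  stmt19_general a ha Φ F Φ₁ Φ₂ F₁ F₂ hΦ₁ hF₁ hΦb hFb Q hQ
end
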